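/- arXiv:2002.02221 — 5 statements merged into one kernel-verified Lean document; each statement's English description precedes it below -/
import Mathlib

section
/- Let K be a field and n, d integers with 1 ≤ d ≤ n − d. If T and T′ are distinct standard Young tableaux of shape (n−d, d), then init(f_T) ≠ init(f_{T′}), where init denotes the initial monomial with respect to the lexicographic order with x_n ≻ x_{n−1} ≻ ⋯ ≻ x_1. -/
open MvPolynomial

/-- A Young tableau of two-row shape `(a, b)` (with `b ≤ a`) filled bijectively with
the letters of `S ⊆ Fin n`.  `top` is the first row, `bot` the second row. -/
structure TwoRowTab (n a b : ℕ) (S : Finset (Fin n)) where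
  hba : b ≤ a
  top : Fin a → Fin n
  bot : Fin b → Fin n
  inj : Function.Injective (Sum.elim top bot)
  range_eq : ∀ s : Fin n, s ∈ S ↔ ∃ x, Sum.elim top bot x = s

/-- The Specht polynomial of a two-row tableau: the product over the two-box columns
`k` of `x_{top k} - x_{bot k}`. -/
noncomputable def spechtPoly (K : Type) [Field K] {n a b : ℕ} {S : Finset (Fin n)}
    (T : TwoRowTab n a b S) : MvPolynomial (Fin n) K :=
  ∏ k : Fin b, (X (T.top (Fin.castLE T.hba k)) - X (T.bot k))

/-- The Specht ideal of the two-row shape `(a, b)` in `K[x_1, …, x_n]`. -/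
noncomputable def spechtIdeal (K : Type) [Field K] (n a b : ℕ) :
    Ideal (MvPolynomial (Fin n) K) :=
  Ideal.span (Set.range (fun T : TwoRowTab n a b Finset.univ => spechtPoly K T))

/-- A Young tableau of three-row shape `(e, e, 1)` filled bijectively with the letters
of `S ⊆ Fin n`; `low` is the unique box of the third row. -/
structure ThreeRowTab (n e : ℕ) (S : Finset (Fin n)) where
  he : 0 < e
  top : Fin e → Fin n
  mid : Fin e → Fin n
  low : Fin n
  inj : Function.Injective (Sum.elim (Sum.elim top mid) (fun _ : Unit => low))
  range_eq : ∀ s : Fin n, s ∈ S ↔ ∃ x, Sum.elim (Sum.elim top mid) (fun _ : Unit => low) x = s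

/-- The Specht polynomial of a tableau of shape `(e, e, 1)`. -/
noncomputable def spechtPoly3 (K : Type) [Field K] {n e : ℕ} {S : Finset (Fin n)}
    (T : ThreeRowTab n e S) : MvPolynomial (Fin n) K :=
  (∏ k : Fin e, (X (T.top k) - X (T.mid k))) *
    ((X (T.top ⟨0, T.he⟩) - X T.low) * (X (T.mid ⟨0, T.he⟩) - X T.low))

/-- The Specht ideal of the shape `(e, e, 1)` in `K[x_1, …, x_n]`. -/
noncomputable def spechtIdeal3 (K : Type) [Field K] (n e : ℕ) :
    Ideal (MvPolynomial (Fin n) K) :=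
  Ideal.span (Set.range (fun T : ThreeRowTab n e Finset.univ => spechtPoly3 K T))

/-- The Hilbert function of `R/I`: the `K`-dimension of the image of the space of
homogeneous polynomials of degree `j` in `R ⧸ I`. -/
noncomputable def hilb (K : Type) [Field K] {n : ℕ} (I : Ideal (MvPolynomial (Fin n) K))
    (j : ℕ) : ℕ :=
  Module.finrank K (Submodule.map (Ideal.Quotient.mkₐ K I).toLinearMap
    (homogeneousSubmodule (Fin n) K j))

/-- The strict lexicographic order on monomial exponents with `x_n ≻ x_{n-1} ≻ ⋯ ≻ x_1`:
`m₁ ≺ m₂` iff at the largest index where they differ, `m₂` has the larger exponent. -/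
def lexLt {n : ℕ} (m₁ m₂ : Fin n →₀ ℕ) : Prop :=
  Finsupp.Lex (fun i j : Fin n => j < i) (· < ·) m₁ m₂

/-- `m` is the initial (leading) monomial exponent of `f` for the lexicographic
order with `x_n ≻ ⋯ ≻ x_1`. -/
def IsInitMonomial {K : Type} [Field K] {n : ℕ} (f : MvPolynomial (Fin n) K)
    (m : Fin n →₀ ℕ) : Prop :=
  m ∈ f.support ∧ ∀ m' ∈ f.support, m' ≠ m → lexLt m' m

/-- The trimmed form of `f`: the sum of the terms of `f` whose monomial is not divisible
by any squarefree monomial of degree `d+1`, i.e. whose support has at most `d` elements. -/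
noncomputable def trm {K : Type} [Field K] {n : ℕ} (d : ℕ) (f : MvPolynomial (Fin n) K) :
    MvPolynomial (Fin n) K :=
  ∑ m ∈ f.support, if m.support.card ≤ d then monomial m (coeff m f) else 0

/-- A two-row tableau is standard if both rows are strictly increasing from left to
right and each two-box column is increasing from top to bottom. -/
def IsStandard2 {n a b : ℕ} {S : Finset (Fin n)} (T : TwoRowTab n a b S) : Prop :=
  StrictMono T.top ∧ StrictMono T.bot ∧ ∀ k : Fin b, T.top (Fin.castLE T.hba k) < T.bot k

section Aux

variable {K : Type} [Field K] {n d : ℕ}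

/-- value of a sum of singles -/
lemma sum_single_apply (c : Fin d → Fin n) (hc : Function.Injective c)
    (s : Finset (Fin d)) (i : Fin n) :
    (∑ k ∈ s, Finsupp.single (c k) 1 : Fin n →₀ ℕ) i
      = if ∃ k ∈ s, c k = i then 1 else 0 := by
  classical
  rw [Finsupp.finset_sum_apply]
  by_cases h : ∃ k ∈ s, c k = i
  · obtain ⟨k, hk, hki⟩ := h
    rw [if_pos ⟨k, hk, hki⟩]
    rw [Finset.sum_eq_single k]
    · simp [Finsupp.single_apply, hki]
    · intro j hj hjk
      have : c j ≠ i := fun h => hjk (hc (h.trans hki.symm))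
      simp [Finsupp.single_apply, this]
    · intro h; exact absurd hk h
  · rw [if_neg h]
    apply Finset.sum_eq_zero
    intro j hj
    have : c j ≠ i := fun he => h ⟨j, hj, he⟩
    simp [Finsupp.single_apply, this]

/-- product of X's is a monomial -/
lemma prod_X_eq_monomial (c : Fin d → Fin n) (s : Finset (Fin d)) :
    (∏ k ∈ s, (X (c k) : MvPolynomial (Fin n) K))
      = monomial (∑ k ∈ s, Finsupp.single (c k) 1) 1 := by
  classical
  induction s using Finset.induction with
  | empty => simp [MvPolynomial.monomial_zero']
  | insert _ _ hx ih =>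
      rw [Finset.prod_insert hx, Finset.sum_insert hx, ih, X,
        MvPolynomial.monomial_mul, one_mul]

noncomputable def mset (a b : Fin d → Fin n) (t : Finset (Fin d)) : Fin n →₀ ℕ :=
  (∑ k ∈ t, Finsupp.single (b k) 1) + ∑ k ∈ tᶜ, Finsupp.single (a k) 1

lemma prod_sub_expand (a b : Fin d → Fin n) :
    (∏ k : Fin d, (X (a k) - X (b k) : MvPolynomial (Fin n) K))
      = ∑ t : Finset (Fin d), monomial (mset a b t) ((-1 : K) ^ t.card) := by
  classical
  have h1 : ∀ k : Fin d, (X (a k) - X (b k) : MvPolynomial (Fin n) K)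
      = (-(X (b k))) + X (a k) := by intro k; ring
  simp only [h1]
  rw [Finset.prod_add]
  rw [Finset.powerset_univ]
  apply Finset.sum_congr rfl
  intro t _
  have hneg : (∏ k ∈ t, (-(X (b k)) : MvPolynomial (Fin n) K))
      = (-1 : MvPolynomial (Fin n) K) ^ t.card * ∏ k ∈ t, X (b k) := by
    rw [← Finset.prod_const, ← Finset.prod_mul_distrib]
    simp
  have huc : Finset.univ \ t = tᶜ := (Finset.compl_eq_univ_sdiff t).symm
  rw [huc, hneg, prod_X_eq_monomial, prod_X_eq_monomial]
  have : (-1 : MvPolynomial (Fin n) K) ^ t.card = C ((-1 : K) ^ t.card) := by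
    rw [map_pow, map_neg, map_one]
  rw [this, mul_assoc, MvPolynomial.monomial_mul, one_mul, C_mul_monomial, mul_one]
  rfl

end Aux

section Aux2

variable {K : Type} [Field K] {n d : ℕ}

lemma lexLt_irrefl (m : Fin n →₀ ℕ) : ¬ lexLt m m := by
  rintro ⟨j, -, h⟩; exact lt_irrefl _ h

lemma lexLt_asymm {m₁ m₂ : Fin n →₀ ℕ} (h : lexLt m₁ m₂) (h' : lexLt m₂ m₁) : False := by
  obtain ⟨i, hi, hlt⟩ := h
  obtain ⟨i', hi', hlt'⟩ := h'
  rcases lt_trichotomy i i' with hc | hc | hc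
  · have := hi i' hc
    rw [this] at hlt'
    exact lt_irrefl _ hlt'
  · subst hc
    exact lt_irrefl _ (hlt.trans hlt')
  · have := hi' i hc
    rw [this] at hlt
    exact lt_irrefl _ hlt

lemma mset_apply (a b : Fin d → Fin n) (hinj : Function.Injective (Sum.elim a b))
    (t : Finset (Fin d)) (i : Fin n) :
    mset a b t i = (if ∃ k ∈ t, b k = i then 1 else 0)
      + (if ∃ k ∈ tᶜ, a k = i then 1 else 0) := by
  classical
  have ha : Function.Injective a := fun x y h => by
    have := hinj (a₁ := Sum.inl x) (a₂ := Sum.inl y) h; simpa using this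
  have hb : Function.Injective b := fun x y h => by
    have := hinj (a₁ := Sum.inr x) (a₂ := Sum.inr y) h; simpa using this
  rw [mset, Finsupp.add_apply, sum_single_apply b hb, sum_single_apply a ha]

lemma hab_ne (a b : Fin d → Fin n) (hinj : Function.Injective (Sum.elim a b))
    (k j : Fin d) : a k ≠ b j := fun h => by
  have := hinj (a₁ := Sum.inl k) (a₂ := Sum.inr j) h; simp at this

lemma lex_mset_lt (a b : Fin d → Fin n) (hinj : Function.Injective (Sum.elim a b))
    (hcol : ∀ k, a k < b k) (t : Finset (Fin d)) (ht : t ≠ Finset.univ) :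
    lexLt (mset a b t) (mset a b Finset.univ) := by
  classical
  have htc : tᶜ.Nonempty := by
    rw [Finset.nonempty_iff_ne_empty]
    intro h
    exact ht (by simpa using congrArg compl h)
  obtain ⟨k0, hk0, hmax⟩ := Finset.exists_max_image tᶜ b htc
  have hk0t : k0 ∉ t := Finset.mem_compl.1 hk0
  refine ⟨b k0, ?_, ?_⟩
  · intro i hi
    rw [mset_apply a b hinj, mset_apply a b hinj]
    have hsecond : ¬ ∃ k ∈ tᶜ, a k = i := by
      rintro ⟨k, hk, rfl⟩
      exact absurd ((hcol k).trans_le (hmax k hk)) (not_lt.2 hi.le)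
    have hsecond' : ¬ ∃ k ∈ (Finset.univ : Finset (Fin d))ᶜ, a k = i := by
      rintro ⟨k, hk, -⟩; simp at hk
    rw [if_neg hsecond, if_neg hsecond']
    by_cases hfull : ∃ k ∈ (Finset.univ : Finset (Fin d)), b k = i
    · obtain ⟨k, -, hki⟩ := hfull
      have hkt : k ∈ t := by
        by_contra hkt
        have := hmax k (Finset.mem_compl.2 hkt)
        rw [hki] at this
        exact absurd hi (not_lt.2 this)
      rw [if_pos ⟨k, hkt, hki⟩, if_pos ⟨k, Finset.mem_univ k, hki⟩]
    · rw [if_neg hfull, if_neg (fun ⟨k, hk, hki⟩ => hfull ⟨k, Finset.mem_univ k, hki⟩)]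
  · rw [mset_apply a b hinj, mset_apply a b hinj]
    have hb : Function.Injective b := fun x y h => by
      have := hinj (a₁ := Sum.inr x) (a₂ := Sum.inr y) h; simpa using this
    have h1 : ¬ ∃ k ∈ t, b k = b k0 := by
      rintro ⟨k, hk, hkk⟩; exact hk0t (hb hkk ▸ hk)
    have h2 : ¬ ∃ k ∈ tᶜ, a k = b k0 := by
      rintro ⟨k, -, hkk⟩; exact hab_ne a b hinj k k0 hkk
    have h3 : ¬ ∃ k ∈ (Finset.univ : Finset (Fin d))ᶜ, a k = b k0 := by
      rintro ⟨k, hk, -⟩; simp at hk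
    rw [if_neg h1, if_neg h2, if_neg h3, if_pos ⟨k0, Finset.mem_univ k0, rfl⟩]
    norm_num

lemma coeff_prod_sub (a b : Fin d → Fin n) (m : Fin n →₀ ℕ) :
    coeff m (∏ k : Fin d, (X (a k) - X (b k) : MvPolynomial (Fin n) K))
      = ∑ t : Finset (Fin d), if mset a b t = m then (-1 : K) ^ t.card else 0 := by
  classical
  rw [prod_sub_expand, coeff_sum]
  simp [coeff_monomial]

lemma isInit_eq (a b : Fin d → Fin n) (hinj : Function.Injective (Sum.elim a b))
    (hcol : ∀ k, a k < b k) {m : Fin n →₀ ℕ}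
    (hm : IsInitMonomial (∏ k : Fin d, (X (a k) - X (b k) : MvPolynomial (Fin n) K)) m) :
    m = mset a b Finset.univ := by
  classical
  obtain ⟨t, ht⟩ : ∃ t : Finset (Fin d), mset a b t = m := by
    by_contra hno
    push_neg at hno
    have := MvPolynomial.mem_support_iff.1 hm.1
    rw [coeff_prod_sub] at this
    exact this (Finset.sum_eq_zero fun t _ => if_neg (hno t))
  by_cases htu : t = Finset.univ
  · rw [← ht, htu]
  exfalso
  have h1 : lexLt m (mset a b Finset.univ) := ht ▸ lex_mset_lt a b hinj hcol t htu
  have hcu : coeff (mset a b Finset.univ)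
      (∏ k : Fin d, (X (a k) - X (b k) : MvPolynomial (Fin n) K)) ≠ 0 := by
    rw [coeff_prod_sub]
    rw [Finset.sum_eq_single Finset.univ]
    · rw [if_pos rfl]
      exact pow_ne_zero _ (neg_ne_zero.2 one_ne_zero)
    · intro s _ hs
      refine if_neg (fun he => ?_)
      exact lexLt_irrefl _ (he ▸ lex_mset_lt a b hinj hcol s hs)
    · intro h; exact absurd (Finset.mem_univ _) h
  have hsup : mset a b Finset.univ
      ∈ (∏ k : Fin d, (X (a k) - X (b k) : MvPolynomial (Fin n) K)).support :=
    MvPolynomial.mem_support_iff.2 hcu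
  have hne : mset a b Finset.univ ≠ m := fun he => lexLt_irrefl _ (he ▸ h1)
  exact lexLt_asymm h1 (hm.2 _ hsup hne)

end Aux2

lemma TwoRowTab.ext' {n a b : ℕ} {S : Finset (Fin n)} {U V : TwoRowTab n a b S}
    (ht : U.top = V.top) (hb : U.bot = V.bot) : U = V := by
  cases U; cases V
  dsimp only at ht hb
  subst ht; subst hb
  rfl

/-- distinct standard Young tableaux of shape `(n-d, d)` have distinct
initial monomials (lexicographic order with `x_n ≻ ⋯ ≻ x_1`). -/
theorem initMonomial_injective_on_standard (K : Type) [Field K] (n d : ℕ) (h1 : 1 ≤ d)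
    (h2 : d ≤ n - d) (T T' : TwoRowTab n (n - d) d Finset.univ)
    (hT : IsStandard2 T) (hT' : IsStandard2 T') (hne : T ≠ T')
    (m m' : Fin n →₀ ℕ) (hm : IsInitMonomial (spechtPoly K T) m)
    (hm' : IsInitMonomial (spechtPoly K T') m') :
    m ≠ m' := by
  intro heq
  apply hne
  obtain ⟨hTt, hTb, hTc⟩ := hT
  obtain ⟨hTt', hTb', hTc'⟩ := hT'
  set a : Fin d → Fin n := fun k => T.top (Fin.castLE T.hba k) with ha_def
  set a' : Fin d → Fin n := fun k => T'.top (Fin.castLE T'.hba k) with ha'_def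
  have hinj : Function.Injective (Sum.elim a T.bot) := by
    have hcomp : Sum.elim a T.bot
        = Sum.elim T.top T.bot ∘ Sum.map (Fin.castLE T.hba) id := by
      funext x; cases x <;> rfl
    rw [hcomp]
    exact T.inj.comp ((Fin.castLE_injective T.hba).sumMap Function.injective_id)
  have hinj' : Function.Injective (Sum.elim a' T'.bot) := by
    have hcomp : Sum.elim a' T'.bot
        = Sum.elim T'.top T'.bot ∘ Sum.map (Fin.castLE T'.hba) id := by
      funext x; cases x <;> rfl
    rw [hcomp]
    exact T'.inj.comp ((Fin.castLE_injective T'.hba).sumMap Function.injective_id)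
  have hmeq : m = mset a T.bot Finset.univ := isInit_eq a T.bot hinj hTc hm
  have hmeq' : m' = mset a' T'.bot Finset.univ := isInit_eq a' T'.bot hinj' hTc' hm'
  have key : ∀ i, (∃ k, T.bot k = i) ↔ (∃ k, T'.bot k = i) := by
    intro i
    have e : mset a T.bot Finset.univ i = mset a' T'.bot Finset.univ i := by
      rw [← hmeq, ← hmeq', heq]
    rw [mset_apply a T.bot hinj, mset_apply a' T'.bot hinj'] at e
    simp only [Finset.compl_univ, Finset.notMem_empty, false_and, exists_false,
      if_false, add_zero, Finset.mem_univ, true_and] at e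
    by_cases hx : ∃ k, T.bot k = i <;> by_cases hy : ∃ k, T'.bot k = i <;>
      simp [hx, hy] at e ⊢
  haveI : WellFoundedLT (Fin d) := inferInstance
  haveI : WellFoundedLT (Fin (n - d)) := inferInstance
  have hrange : Set.range T.bot = Set.range T'.bot := Set.ext fun i => key i
  have hbot_eq : T.bot = T'.bot := (StrictMono.range_inj hTb hTb').1 hrange
  have htopr : ∀ U : TwoRowTab n (n - d) d Finset.univ,
      Set.range U.top = (Set.range U.bot)ᶜ := by
    intro U
    ext s
    simp only [Set.mem_compl_iff, Set.mem_range]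
    constructor
    · rintro ⟨x, rfl⟩ ⟨y, hy⟩
      have := U.inj (a₁ := Sum.inl x) (a₂ := Sum.inr y) hy.symm
      simp at this
    · intro hs
      obtain ⟨x, hx⟩ := (U.range_eq s).1 (Finset.mem_univ s)
      cases x with
      | inl u => exact ⟨u, hx⟩
      | inr v => exact absurd ⟨v, hx⟩ hs
  have htop_eq : T.top = T'.top :=
    (StrictMono.range_inj hTt hTt').1 (by rw [htopr T, htopr T', hrange])
  exact TwoRowTab.ext' htop_eq hbot_eq
end

section
/- Let K be a field, n, d integers with 1 ≤ d ≤ n − d, and let V_{(n−d,d)} ⊆ R be the K-linear span of the Specht polynomials f_T for all Young tableaux T of shape (n−d, d). For every nonzero f ∈ V_{(n−d,d)} there exists a unique standard Young tableau T of shape (n−d, d) such that init(f) = init(f_T), where init denotes the initial monomial with respect to the lexicographic order with x_n ≻ x_{n−1} ≻ ⋯ ≻ x_1. -/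
open MvPolynomial

/-!
Every Specht polynomial is a product `∏ (x_a - x_b)` over `d` disjoint pairs of letters, and such
products can be straightened: an inverted pair only changes the sign when it is turned around, two
nested pairs `w < x < y < z` satisfy
`(x_w - x_z)(x_x - x_y) = (x_w - x_y)(x_x - x_z) - (x_w - x_x)(x_y - x_z)`,
and a pair `(a, b)` together with an unused letter `e < a` satisfies
`x_a - x_b = (x_e - x_b) - (x_e - x_a)`. Every step lowers a well-founded measure, and the products
to which no step applies are the Specht polynomials of standard tableaux, so these span the Specht
module. The initial monomial of the Specht polynomial of a standard tableau is the product of the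
variables in its second row, which determines the tableau. A span of polynomials with pairwise
distinct initial monomials is triangular: the initial monomial of each nonzero element is one of them.
-/

open scoped MonomialOrder

noncomputable def lexOrder (n : ℕ) : MonomialOrder (Fin n) :=
  MonomialOrder.lex (σ := (Fin n)ᵒᵈ)

theorem lexOrder_lt_iff {n : ℕ} {m₁ m₂ : Fin n →₀ ℕ} : m₁ ≺[lexOrder n] m₂ ↔ lexLt m₁ m₂ :=
  Iff.rfl

theorem isInitMonomial_iff {K : Type} [Field K] {n : ℕ} {f : MvPolynomial (Fin n) K}
    {m : Fin n →₀ ℕ} : IsInitMonomial f m ↔ f ≠ 0 ∧ (lexOrder n).degree f = m := by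
  constructor
  · rintro ⟨hm, hlt⟩
    have hf : f ≠ 0 := by rintro rfl; simp at hm
    refine ⟨hf, by_contra fun hne => ?_⟩
    exact (lexOrder_lt_iff.mpr (hlt _ ((lexOrder n).degree_mem_support hf) hne)).not_ge
      ((lexOrder n).le_degree hm)
  · rintro ⟨hf, rfl⟩
    exact ⟨(lexOrder n).degree_mem_support hf, fun m' hm' hne =>
      ((lexOrder n).le_degree hm').lt_of_ne ((lexOrder n).toSyn.injective.ne hne)⟩

theorem MonomialOrder.exists_degree_eq_of_mem_span {σ R ι : Type*} [CommRing R]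
    [NoZeroDivisors R] (m : MonomialOrder σ) {g : ι → MvPolynomial σ R} (hg0 : ∀ i, g i ≠ 0)
    (hg : Function.Injective fun i => m.degree (g i)) {f : MvPolynomial σ R}
    (hf : f ∈ Submodule.span R (Set.range g)) (hf0 : f ≠ 0) :
    ∃ i, m.degree f = m.degree (g i) := by
  classical
  obtain ⟨c, rfl⟩ := Finsupp.mem_span_range_iff_exists_finsupp.mp hf
  have hc : c.support.Nonempty :=
    Finset.nonempty_iff_ne_empty.2 fun h => hf0 (by simp [Finsupp.sum, h])
  obtain ⟨i₀, hi₀, hmax⟩ := c.support.exists_max_image (fun i => m.toSyn (m.degree (g i))) hc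
  have hlt : ∀ i ∈ c.support, i ≠ i₀ → m.degree (g i) ≺[m] m.degree (g i₀) := fun i hi hne =>
    (hmax i hi).lt_of_ne fun h => hne (hg (m.toSyn.injective h))
  have hcoeff : coeff (m.degree (g i₀)) (c.sum fun i a => a • g i) ≠ 0 := by
    rw [Finsupp.sum, coeff_sum, Finset.sum_eq_single_of_mem i₀ hi₀ fun i hi hne => by
      rw [coeff_smul, m.coeff_eq_zero_of_lt (hlt i hi hne), smul_zero], coeff_smul]
    exact smul_ne_zero (Finsupp.mem_support_iff.mp hi₀) (m.coeff_degree_ne_zero_iff.mpr (hg0 i₀))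
  refine ⟨i₀, m.toSyn.injective (le_antisymm ?_ (m.le_degree (mem_support_iff.mpr hcoeff)))⟩
  refine m.degree_sum_le.trans (Finset.sup_le fun i hi => ?_)
  exact m.degree_smul_le.trans (hmax i hi)

theorem Finsupp.mem_range_iff_sum_single_ne_zero {ι α : Type*} [Fintype ι] (f : ι → α) (j : α) :
    j ∈ Set.range f ↔ (∑ k, Finsupp.single (f k) (1 : ℕ)) j ≠ 0 := by
  classical
  simp [Finsupp.finsetSum_apply, Finsupp.single_apply]

theorem Finset.orderEmbOfFin_castLE_eq_orderEmbOfFin {α : Type*} [LinearOrder α] {C L : Finset α}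
    {d m : ℕ} (hLC : L ⊆ C) (hdown : ∀ x ∈ C, ∀ y ∈ L, x < y → x ∈ L) (hL : L.card = d)
    (hC : C.card = m) (hdm : d ≤ m) (k : Fin d) :
    C.orderEmbOfFin hC (Fin.castLE hdm k) = L.orderEmbOfFin hL k := by
  set g := C.orderEmbOfFin hC
  have hinj : Function.Injective fun k => g (Fin.castLE hdm k) :=
    fun j k h => Fin.castLE_injective hdm (g.injective h)
  have hsub : L ⊆ Finset.univ.image fun k => g (Fin.castLE hdm k) := by
    intro l hl
    obtain ⟨i, rfl⟩ : l ∈ Set.range g := by rw [Finset.range_orderEmbOfFin]; exact hLC hl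
    by_cases hi : (i : ℕ) < d
    · exact Finset.mem_image.2 ⟨⟨i, hi⟩, Finset.mem_univ _, rfl⟩
    have hins : insert (g i) (Finset.univ.image fun k => g (Fin.castLE hdm k)) ⊆ L := by
      refine Finset.insert_subset hl fun x hx => ?_
      obtain ⟨k, -, rfl⟩ := Finset.mem_image.1 hx
      exact hdown _ (C.orderEmbOfFin_mem hC _) _ hl (g.strictMono (by simp [Fin.lt_def]; omega))
    have := Finset.card_le_card hins
    rw [Finset.card_insert_of_notMem (by simp [Fin.ext_iff]; omega),
      Finset.card_image_of_injective _ hinj] at this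
    simp only [Finset.card_univ, Fintype.card_fin, Order.add_one_le_iff] at this
    omega
  have himage : (Finset.univ.image fun k => g (Fin.castLE hdm k)) = L :=
    (Finset.eq_of_subset_of_card_le hsub (by simp [Finset.card_image_of_injective _ hinj, hL])).symm
  refine congrFun (Finset.orderEmbOfFin_unique hL (fun k => ?_) fun i j hij => g.strictMono hij) k
  exact himage ▸ Finset.mem_image_of_mem _ (Finset.mem_univ k)

/-- `d` disjoint pairs of letters; the `k`-th pair is `(P (.inl k), P (.inr k))`. -/
abbrev Pairing (n d : ℕ) := Fin d ⊕ Fin d ↪ Fin n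

namespace Pairing

variable {n d : ℕ}

@[to_additive]
theorem prod_trans {M : Type*} [CommMonoid M] (F : Fin n → Fin n → M) (P : Pairing n d)
    (σ : Equiv.Perm (Fin n)) (s : Finset (Fin d))
    (hσ : ∀ j ∉ s, σ (P (.inl j)) = P (.inl j) ∧ σ (P (.inr j)) = P (.inr j)) :
    ∏ k, F ((P.trans σ.toEmbedding) (.inl k)) ((P.trans σ.toEmbedding) (.inr k)) =
      (∏ k ∈ s, F (σ (P (.inl k))) (σ (P (.inr k)))) * ∏ k ∈ sᶜ, F (P (.inl k)) (P (.inr k)) := by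
  rw [← Finset.prod_mul_prod_compl s]
  congr 1
  refine Finset.prod_congr rfl fun j hj => ?_
  have := hσ j (Finset.mem_compl.mp hj)
  simp [this.1, this.2]

/-- Compared lexicographically: the letters used go down when an unused smaller letter is brought
in, the larger letters go down when nested pairs are separated, and `(n + a - b) ^ 2` (never
truncated, as `b < n`) goes down when nested pairs are made to cross or an inverted pair is
turned around. -/
def weight (n : ℕ) (a b : Fin n) : ℕ ×ₗ ℕ ×ₗ ℕ :=
  toLex (2 ^ (a : ℕ) + 2 ^ (b : ℕ), toLex (2 ^ max (a : ℕ) b, (n + a - b) ^ 2))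

theorem weight_add_weight (a b c e : Fin n) : weight n a b + weight n c e =
    toLex (2 ^ (a : ℕ) + 2 ^ (b : ℕ) + (2 ^ (c : ℕ) + 2 ^ (e : ℕ)),
      toLex (2 ^ max (a : ℕ) b + 2 ^ max (c : ℕ) e, (n + a - b) ^ 2 + (n + c - e) ^ 2)) :=
  rfl

theorem weight_lt_weight_of_letters_lt {a b c e : Fin n}
    (h : 2 ^ (a : ℕ) + 2 ^ (b : ℕ) < 2 ^ (c : ℕ) + 2 ^ (e : ℕ)) : weight n a b < weight n c e :=
  Prod.Lex.toLex_lt_toLex.2 (Or.inl h)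

theorem weight_swap_lt {a b : Fin n} (h : b < a) : weight n b a < weight n a b := by
  refine Prod.Lex.toLex_lt_toLex.2 (Or.inr ⟨add_comm _ _,
    Prod.Lex.toLex_lt_toLex.2 (Or.inr ⟨by rw [max_comm], ?_⟩)⟩)
  have : (b : ℕ) < a := h
  have : (a : ℕ) < n := a.isLt
  exact Nat.pow_lt_pow_left (by omega) two_ne_zero

section Nested

variable {w x y z : Fin n}

theorem weight_separated_lt_nested (hwx : w < x) (hxy : x < y) (hyz : y < z) :
    weight n w x + weight n y z < weight n w z + weight n x y := by
  have h1 : (w : ℕ) < x := hwx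
  have h2 : (x : ℕ) < y := hxy
  have h3 : (y : ℕ) < z := hyz
  rw [weight_add_weight, weight_add_weight]
  refine Prod.Lex.toLex_lt_toLex.2 (Or.inr ⟨by ring, Prod.Lex.toLex_lt_toLex.2 (Or.inl ?_)⟩)
  rw [max_eq_right (by omega), max_eq_right (by omega), max_eq_right (by omega),
    max_eq_right (by omega)]
  have : 2 ^ (x : ℕ) < 2 ^ (y : ℕ) := Nat.pow_lt_pow_right one_lt_two hxy
  omega

theorem weight_crossed_lt_nested (hwx : w < x) (hxy : x < y) (hyz : y < z) :
    weight n w y + weight n x z < weight n w z + weight n x y := by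
  have h1 : (w : ℕ) < x := hwx
  have h2 : (x : ℕ) < y := hxy
  have h3 : (y : ℕ) < z := hyz
  have h4 : (z : ℕ) < n := z.isLt
  rw [weight_add_weight, weight_add_weight]
  refine Prod.Lex.toLex_lt_toLex.2 (Or.inr ⟨by ring, Prod.Lex.toLex_lt_toLex.2 (Or.inr ⟨?_, ?_⟩)⟩)
  · rw [max_eq_right (by omega), max_eq_right (by omega), max_eq_right (by omega),
      max_eq_right (by omega), add_comm]
  · zify [show (z : ℕ) ≤ n + w by omega, show (y : ℕ) ≤ n + w by omega,
      show (z : ℕ) ≤ n + x by omega, show (y : ℕ) ≤ n + x by omega]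
    nlinarith [mul_pos (show (0 : ℤ) < x - w by omega) (show (0 : ℤ) < z - y by omega)]

end Nested

def rank (P : Pairing n d) : ℕ ×ₗ ℕ ×ₗ ℕ :=
  ∑ k, weight n (P (.inl k)) (P (.inr k))

theorem rank_trans_lt (P : Pairing n d) (σ : Equiv.Perm (Fin n)) (s : Finset (Fin d))
    (hσ : ∀ j ∉ s, σ (P (.inl j)) = P (.inl j) ∧ σ (P (.inr j)) = P (.inr j))
    (h : ∑ k ∈ s, weight n (σ (P (.inl k))) (σ (P (.inr k))) <
      ∑ k ∈ s, weight n (P (.inl k)) (P (.inr k))) :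
    rank (P.trans σ.toEmbedding) < rank P := by
  rw [rank, rank, sum_trans _ P σ s hσ, ← Finset.sum_add_sum_compl s]
  exact add_lt_add_left h _

variable (R : Type*) [CommRing R]

noncomputable def poly (P : Pairing n d) : MvPolynomial (Fin n) R :=
  ∏ k, (X (P (.inl k)) - X (P (.inr k)))

theorem poly_eq_prod_mul_prod_compl (P : Pairing n d) (s : Finset (Fin d)) :
    poly R P = (∏ k ∈ s, (X (P (.inl k)) - X (P (.inr k)))) *
      ∏ k ∈ sᶜ, (X (P (.inl k)) - X (P (.inr k)) : MvPolynomial (Fin n) R) :=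
  (Finset.prod_mul_prod_compl s _).symm

theorem poly_trans (P : Pairing n d) (σ : Equiv.Perm (Fin n)) (s : Finset (Fin d))
    (hσ : ∀ j ∉ s, σ (P (.inl j)) = P (.inl j) ∧ σ (P (.inr j)) = P (.inr j)) :
    poly R (P.trans σ.toEmbedding) = (∏ k ∈ s, (X (σ (P (.inl k))) - X (σ (P (.inr k))))) *
      ∏ k ∈ sᶜ, (X (P (.inl k)) - X (P (.inr k)) : MvPolynomial (Fin n) R) :=
  prod_trans (fun a b => (X a - X b : MvPolynomial (Fin n) R)) P σ s hσ

noncomputable def lowerSpan (P : Pairing n d) : Submodule R (MvPolynomial (Fin n) R) :=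
  Submodule.span R (poly R '' {Q : Pairing n d | rank Q < rank P})

variable {R}

theorem poly_mem_lowerSpan_of_inverted {P : Pairing n d} {k : Fin d}
    (h : P (.inr k) < P (.inl k)) : poly R P ∈ lowerSpan R P := by
  set σ := Equiv.swap (P (.inl k)) (P (.inr k))
  have hσ : ∀ j ∉ ({k} : Finset _),
      σ (P (.inl j)) = P (.inl j) ∧ σ (P (.inr j)) = P (.inr j) := by
    intro j hj
    rw [Finset.mem_singleton] at hj
    simp [σ, Equiv.swap_apply_def, hj]
  have hrank : rank (P.trans σ.toEmbedding) < rank P := by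
    refine rank_trans_lt P σ {k} hσ ?_
    rw [Finset.sum_singleton, Finset.sum_singleton, Equiv.swap_apply_left,
      Equiv.swap_apply_right]
    exact weight_swap_lt h
  have hpoly : poly R P = -poly R (P.trans σ.toEmbedding) := by
    rw [poly_trans R P σ {k} hσ, poly_eq_prod_mul_prod_compl R P {k}, Finset.prod_singleton,
      Finset.prod_singleton, Equiv.swap_apply_left, Equiv.swap_apply_right]
    ring
  rw [hpoly]
  exact neg_mem (Submodule.subset_span ⟨_, hrank, rfl⟩)

theorem poly_mem_lowerSpan_of_nested {P : Pairing n d} {k l : Fin d}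
    (hl : P (.inl l) < P (.inr l)) (hkl : P (.inl k) < P (.inl l))
    (hlk : P (.inr l) < P (.inr k)) : poly R P ∈ lowerSpan R P := by
  have hne : k ≠ l := by rintro rfl; exact hkl.false
  set w := P (.inl k)
  set x := P (.inl l)
  set y := P (.inr l)
  set z := P (.inr k)
  set σ₁ := Equiv.swap y z
  set σ₂ := Equiv.swap x z * Equiv.swap x y
  have hσ₁ : ∀ j ∉ ({k, l} : Finset _),
      σ₁ (P (.inl j)) = P (.inl j) ∧ σ₁ (P (.inr j)) = P (.inr j) := by
    intro j hj
    simp only [Finset.mem_insert, Finset.mem_singleton, not_or] at hj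
    simp [σ₁, y, z, Equiv.swap_apply_def, hj.1, hj.2]
  have hσ₂ : ∀ j ∉ ({k, l} : Finset _),
      σ₂ (P (.inl j)) = P (.inl j) ∧ σ₂ (P (.inr j)) = P (.inr j) := by
    intro j hj
    simp only [Finset.mem_insert, Finset.mem_singleton, not_or] at hj
    simp [σ₂, x, y, z, Equiv.swap_apply_def, hj.1, hj.2]
  have hσ₁' : σ₁ w = w ∧ σ₁ z = y ∧ σ₁ x = x ∧ σ₁ y = z := by
    simp [σ₁, w, x, y, z, Equiv.swap_apply_def]
  have hσ₂' : σ₂ w = w ∧ σ₂ z = x ∧ σ₂ x = y ∧ σ₂ y = z := by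
    simp [σ₂, w, x, y, z, Equiv.swap_apply_def, hne, hne.symm]
  have h₁ : rank (P.trans σ₁.toEmbedding) < rank P := by
    refine rank_trans_lt P σ₁ _ hσ₁ ?_
    rw [Finset.sum_pair hne, Finset.sum_pair hne, hσ₁'.1, hσ₁'.2.1, hσ₁'.2.2.1, hσ₁'.2.2.2]
    exact weight_crossed_lt_nested hkl hl hlk
  have h₂ : rank (P.trans σ₂.toEmbedding) < rank P := by
    refine rank_trans_lt P σ₂ _ hσ₂ ?_
    rw [Finset.sum_pair hne, Finset.sum_pair hne, hσ₂'.1, hσ₂'.2.1, hσ₂'.2.2.1, hσ₂'.2.2.2]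
    exact weight_separated_lt_nested hkl hl hlk
  have hpoly :
      poly R P = poly R (P.trans σ₁.toEmbedding) - poly R (P.trans σ₂.toEmbedding) := by
    rw [poly_trans R P σ₁ _ hσ₁, poly_trans R P σ₂ _ hσ₂, poly_eq_prod_mul_prod_compl R P {k, l},
      Finset.prod_pair hne, Finset.prod_pair hne, Finset.prod_pair hne, hσ₁'.1, hσ₁'.2.1,
      hσ₁'.2.2.1, hσ₁'.2.2.2, hσ₂'.1, hσ₂'.2.1, hσ₂'.2.2.1, hσ₂'.2.2.2]
    ring
  rw [hpoly]
  exact sub_mem (Submodule.subset_span ⟨_, h₁, rfl⟩) (Submodule.subset_span ⟨_, h₂, rfl⟩)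

theorem poly_mem_lowerSpan_of_free {P : Pairing n d} {k : Fin d} {e : Fin n}
    (hk : P (.inl k) < P (.inr k)) (hek : e < P (.inl k)) (he : e ∉ Set.range P) :
    poly R P ∈ lowerSpan R P := by
  have he' : ∀ x, P x ≠ e := fun x hx => he ⟨x, hx⟩
  set a := P (.inl k)
  set b := P (.inr k)
  set σ₁ := Equiv.swap a e
  set σ₂ := Equiv.swap b e * Equiv.swap a b
  have hσ₁ : ∀ j ∉ ({k} : Finset _),
      σ₁ (P (.inl j)) = P (.inl j) ∧ σ₁ (P (.inr j)) = P (.inr j) := by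
    intro j hj
    rw [Finset.mem_singleton] at hj
    simp [σ₁, a, Equiv.swap_apply_def, hj, he']
  have hσ₂ : ∀ j ∉ ({k} : Finset _),
      σ₂ (P (.inl j)) = P (.inl j) ∧ σ₂ (P (.inr j)) = P (.inr j) := by
    intro j hj
    rw [Finset.mem_singleton] at hj
    simp [σ₂, a, b, Equiv.swap_apply_def, hj, he']
  have hσ₁' : σ₁ a = e ∧ σ₁ b = b := by simp [σ₁, a, b, Equiv.swap_apply_def, he']
  have hσ₂' : σ₂ a = e ∧ σ₂ b = a := by simp [σ₂, a, b, Equiv.swap_apply_def, he']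
  have hea : 2 ^ (e : ℕ) < 2 ^ (a : ℕ) := Nat.pow_lt_pow_right one_lt_two hek
  have h₁ : rank (P.trans σ₁.toEmbedding) < rank P := by
    refine rank_trans_lt P σ₁ _ hσ₁ ?_
    rw [Finset.sum_singleton, Finset.sum_singleton, hσ₁'.1, hσ₁'.2]
    exact weight_lt_weight_of_letters_lt (add_lt_add_left hea _)
  have h₂ : rank (P.trans σ₂.toEmbedding) < rank P := by
    refine rank_trans_lt P σ₂ _ hσ₂ ?_
    rw [Finset.sum_singleton, Finset.sum_singleton, hσ₂'.1, hσ₂'.2]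
    exact weight_lt_weight_of_letters_lt (add_lt_add hea (Nat.pow_lt_pow_right one_lt_two hk))
  have hpoly :
      poly R P = poly R (P.trans σ₁.toEmbedding) - poly R (P.trans σ₂.toEmbedding) := by
    rw [poly_trans R P σ₁ _ hσ₁, poly_trans R P σ₂ _ hσ₂, poly_eq_prod_mul_prod_compl R P {k},
      Finset.prod_singleton, Finset.prod_singleton, Finset.prod_singleton, hσ₁'.1, hσ₁'.2,
      hσ₂'.1, hσ₂'.2]
    ring
  rw [hpoly]
  exact sub_mem (Submodule.subset_span ⟨_, h₁, rfl⟩) (Submodule.subset_span ⟨_, h₂, rfl⟩)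

def IsStandard (P : Pairing n d) : Prop :=
  (∀ k, P (.inl k) < P (.inr k)) ∧
  (∀ k l, ¬(P (.inl k) < P (.inl l) ∧ P (.inr l) < P (.inr k))) ∧
  ∀ k e, e < P (.inl k) → e ∈ Set.range P

theorem poly_mem_lowerSpan_of_not_isStandard {P : Pairing n d} (hP : ¬P.IsStandard) :
    poly R P ∈ lowerSpan R P := by
  by_cases hord : ∀ k, P (.inl k) < P (.inr k)
  · by_cases hnest : ∀ k l, ¬(P (.inl k) < P (.inl l) ∧ P (.inr l) < P (.inr k))
    · have hfree : ¬∀ k e, e < P (.inl k) → e ∈ Set.range P := fun h => hP ⟨hord, hnest, h⟩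
      push Not at hfree
      obtain ⟨k, e, hek, he⟩ := hfree
      exact poly_mem_lowerSpan_of_free (hord k) hek he
    · push Not at hnest
      obtain ⟨k, l, hkl, hlk⟩ := hnest
      exact poly_mem_lowerSpan_of_nested (hord l) hkl hlk
  · push Not at hord
    obtain ⟨k, hk⟩ := hord
    exact poly_mem_lowerSpan_of_inverted (hk.lt_of_ne (P.injective.ne (by simp)))

variable (R) in
theorem poly_mem_span_isStandard (P : Pairing n d) :
    poly R P ∈ Submodule.span R (poly R '' {Q : Pairing n d | Q.IsStandard}) := by
  induction P using (InvImage.wf rank wellFounded_lt).induction with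
  | _ P ih =>
    by_cases hP : P.IsStandard
    · exact Submodule.subset_span ⟨P, hP, rfl⟩
    · exact Submodule.span_le.2 (Set.image_subset_iff.2 fun Q hQ => ih Q hQ)
        (poly_mem_lowerSpan_of_not_isStandard hP)

theorem IsStandard.strictMono_inl {P : Pairing n d} (hP : P.IsStandard) {f : Fin d → Fin d}
    (hf : Function.Injective f) (hinr : StrictMono fun k => P (.inr (f k))) :
    StrictMono fun k => P (.inl (f k)) := fun i j hij =>
  lt_of_le_of_ne (not_lt.1 fun h => hP.2.1 (f j) (f i) ⟨h, hinr hij⟩)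
    (P.injective.ne (by simpa using hf.ne hij.ne))

def inlSet (P : Pairing n d) : Finset (Fin n) :=
  Finset.univ.image fun k => P (.inl k)

def inrSet (P : Pairing n d) : Finset (Fin n) :=
  Finset.univ.image fun k => P (.inr k)

theorem inl_mem_inlSet (P : Pairing n d) (k : Fin d) : P (.inl k) ∈ P.inlSet :=
  Finset.mem_image_of_mem _ (Finset.mem_univ k)

theorem inr_mem_inrSet (P : Pairing n d) (k : Fin d) : P (.inr k) ∈ P.inrSet :=
  Finset.mem_image_of_mem _ (Finset.mem_univ k)

theorem card_inlSet (P : Pairing n d) : P.inlSet.card = d := by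
  simpa [inlSet] using Finset.card_image_of_injective Finset.univ fun i j h =>
    Sum.inl_injective (P.injective h)

theorem card_inrSet (P : Pairing n d) : P.inrSet.card = d := by
  simpa [inrSet] using Finset.card_image_of_injective Finset.univ fun i j h =>
    Sum.inr_injective (P.injective h)

theorem inlSet_subset_compl_inrSet (P : Pairing n d) : P.inlSet ⊆ P.inrSetᶜ := by
  simp [inlSet, inrSet, Finset.subset_iff]

theorem IsStandard.mem_inlSet_of_lt {P : Pairing n d} (hP : P.IsStandard) {x y : Fin n}
    (hx : x ∉ P.inrSet) (hy : y ∈ P.inlSet) (hxy : x < y) : x ∈ P.inlSet := by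
  obtain ⟨k, -, rfl⟩ := Finset.mem_image.1 hy
  obtain ⟨j | j, rfl⟩ := hP.2.2 k x hxy
  · exact P.inl_mem_inlSet j
  · exact absurd (P.inr_mem_inrSet j) hx

section Domain

variable [IsDomain R]

theorem X_inl_sub_X_inr_ne_zero (P : Pairing n d) (k : Fin d) :
    (X (P (.inl k)) - X (P (.inr k)) : MvPolynomial (Fin n) R) ≠ 0 :=
  sub_ne_zero.2 (X_injective.ne (P.injective.ne Sum.inl_ne_inr))

theorem poly_ne_zero (P : Pairing n d) : poly R P ≠ 0 :=
  Finset.prod_ne_zero_iff.2 fun k _ => P.X_inl_sub_X_inr_ne_zero k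

theorem degree_X_sub_X {a b : Fin n} (h : a < b) :
    (lexOrder n).degree (X a - X b : MvPolynomial (Fin n) R) = Finsupp.single b 1 := by
  rw [← neg_sub, MonomialOrder.degree_neg, MonomialOrder.degree_sub_of_lt, MonomialOrder.degree_X]
  rw [MonomialOrder.degree_X, MonomialOrder.degree_X, lexOrder_lt_iff]
  refine ⟨b, fun j hj => ?_, by simp [h.ne]⟩
  simp [(h.trans hj).ne, hj.ne]

theorem degree_poly {P : Pairing n d} (hP : ∀ k, P (.inl k) < P (.inr k)) :
    (lexOrder n).degree (poly R P) = ∑ k, Finsupp.single (P (.inr k)) 1 := by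
  rw [poly, MonomialOrder.degree_prod fun k _ => P.X_inl_sub_X_inr_ne_zero k]
  exact Finset.sum_congr rfl fun k _ => degree_X_sub_X (hP k)

end Domain

end Pairing

namespace TwoRowTab

variable {n a b : ℕ}

def toPairing {S : Finset (Fin n)} (T : TwoRowTab n a b S) : Pairing n b :=
  ⟨Sum.elim (T.top ∘ Fin.castLE T.hba) T.bot, by
    simpa [Sum.elim_comp_map] using
      T.inj.comp (Sum.map_injective.2 ⟨Fin.castLE_injective T.hba, Function.injective_id⟩)⟩

theorem range_top (T : TwoRowTab n a b Finset.univ) : Set.range T.top = (Set.range T.bot)ᶜ := by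
  ext s
  constructor
  · rintro ⟨i, rfl⟩ ⟨j, hj⟩
    exact Sum.inr_ne_inl (T.inj (a₁ := .inr j) (a₂ := .inl i) hj)
  · intro hs
    obtain ⟨i | j, h⟩ := (T.range_eq s).1 (Finset.mem_univ s)
    · exact ⟨i, h⟩
    · exact absurd ⟨j, h⟩ hs

theorem eq_of_range_bot_eq {T T' : TwoRowTab n a b Finset.univ} (hT : IsStandard2 T)
    (hT' : IsStandard2 T') (h : Set.range T.bot = Set.range T'.bot) : T = T' := by
  have hbot : T.bot = T'.bot := (hT.2.1.range_inj hT'.2.1).1 h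
  have htop : T.top = T'.top := (hT.1.range_inj hT'.1).1 (by rw [range_top, range_top, h])
  cases T
  cases T'
  simp_all

noncomputable def ofBot (H : Finset (Fin n)) (hH : H.card = b) (hHc : Hᶜ.card = a) (hba : b ≤ a) :
    TwoRowTab n a b Finset.univ where
  hba := hba
  top := Hᶜ.orderEmbOfFin hHc
  bot := H.orderEmbOfFin hH
  inj := (Hᶜ.orderEmbOfFin hHc).injective.sumElim (H.orderEmbOfFin hH).injective fun i j h =>
    Finset.mem_compl.1 (h ▸ Hᶜ.orderEmbOfFin_mem hHc i) (H.orderEmbOfFin_mem hH j)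
  range_eq s := by
    simp only [Finset.mem_univ, true_iff]
    rw [← Set.mem_range, Set.Sum.elim_range, Finset.range_orderEmbOfFin,
      Finset.range_orderEmbOfFin, Finset.coe_compl, Set.compl_union_self]
    trivial

variable (K : Type) [Field K]

theorem spechtPoly_eq_poly {S : Finset (Fin n)} (T : TwoRowTab n a b S) :
    spechtPoly K T = T.toPairing.poly K :=
  rfl

theorem spechtPoly_ne_zero {S : Finset (Fin n)} (T : TwoRowTab n a b S) : spechtPoly K T ≠ 0 := by
  rw [spechtPoly_eq_poly]
  exact Pairing.poly_ne_zero _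

theorem degree_spechtPoly {S : Finset (Fin n)} {T : TwoRowTab n a b S} (hT : IsStandard2 T) :
    (lexOrder n).degree (spechtPoly K T) = ∑ k, Finsupp.single (T.bot k) 1 := by
  rw [spechtPoly_eq_poly, Pairing.degree_poly (P := T.toPairing) hT.2.2]
  rfl

theorem degree_spechtPoly_injective :
    Function.Injective fun T : {T : TwoRowTab n a b Finset.univ // IsStandard2 T} =>
      (lexOrder n).degree (spechtPoly K T.1) := by
  rintro ⟨T, hT⟩ ⟨T', hT'⟩ h
  simp only [degree_spechtPoly K hT, degree_spechtPoly K hT'] at h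
  refine Subtype.ext (eq_of_range_bot_eq hT hT' (Set.ext fun j => ?_))
  rw [Finsupp.mem_range_iff_sum_single_ne_zero, h, ← Finsupp.mem_range_iff_sum_single_ne_zero]

end TwoRowTab

namespace Pairing

variable {n d : ℕ}

theorem IsStandard.exists_isStandard2 (K : Type) [Field K] {P : Pairing n d}
    (hP : P.IsStandard) (hd : d ≤ n - d) :
    ∃ T : TwoRowTab n (n - d) d Finset.univ, IsStandard2 T ∧ spechtPoly K T = poly K P := by
  -- Sorted by their larger letters, the pairs also have increasing smaller letters, and these
  -- are the `d` smallest letters outside the second row.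
  set τ := Tuple.sort fun k => P (.inr k)
  have hinr : StrictMono fun k => P (.inr (τ k)) :=
    (Tuple.monotone_sort fun k => P (.inr k)).strictMono_of_injective
      (P.injective.comp (Sum.inr_injective.comp τ.injective))
  have hHc : P.inrSetᶜ.card = n - d := by rw [Finset.card_compl, card_inrSet, Fintype.card_fin]
  have hbot : ∀ k, P.inrSet.orderEmbOfFin P.card_inrSet k = P (.inr (τ k)) := congrFun
    (Finset.orderEmbOfFin_unique P.card_inrSet (fun k => P.inr_mem_inrSet _) hinr).symm
  have htop : ∀ k, P.inrSetᶜ.orderEmbOfFin hHc (Fin.castLE hd k) = P (.inl (τ k)) := fun k =>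
    (Finset.orderEmbOfFin_castLE_eq_orderEmbOfFin P.inlSet_subset_compl_inrSet
      (fun x hx _ hy hxy => hP.mem_inlSet_of_lt (Finset.mem_compl.1 hx) hy hxy)
      P.card_inlSet hHc hd k).trans <| congrFun
      (Finset.orderEmbOfFin_unique P.card_inlSet (fun k => P.inl_mem_inlSet _)
        (hP.strictMono_inl τ.injective hinr)).symm k
  refine ⟨TwoRowTab.ofBot P.inrSet P.card_inrSet hHc hd,
    ⟨(P.inrSetᶜ.orderEmbOfFin hHc).strictMono, (P.inrSet.orderEmbOfFin _).strictMono,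
      fun k => ?_⟩, ?_⟩
  · change P.inrSetᶜ.orderEmbOfFin hHc (Fin.castLE hd k) < P.inrSet.orderEmbOfFin _ k
    rw [htop, hbot]
    exact hP.1 _
  · change ∏ k, (X (P.inrSetᶜ.orderEmbOfFin hHc (Fin.castLE hd k)) -
      X (P.inrSet.orderEmbOfFin P.card_inrSet k)) = _
    simp_rw [htop, hbot]
    exact Equiv.prod_comp τ fun k => X (P (.inl k)) - X (P (.inr k))

end Pairing

theorem TwoRowTab.spechtPoly_mem_span_isStandard2 (K : Type) [Field K] {n d : ℕ}
    (hd : d ≤ n - d) (T : TwoRowTab n (n - d) d Finset.univ) :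
    spechtPoly K T ∈ Submodule.span K (Set.range fun T :
      {T : TwoRowTab n (n - d) d Finset.univ // IsStandard2 T} => spechtPoly K T.1) := by
  refine Submodule.span_le.2 ?_ (T.toPairing.poly_mem_span_isStandard K)
  rintro _ ⟨P, hP, rfl⟩
  obtain ⟨T', hT', h⟩ := hP.exists_isStandard2 K hd
  exact Submodule.subset_span ⟨⟨T', hT'⟩, h⟩

theorem initMonomial_mem_spechtModule_general (K : Type) [Field K] (n d : ℕ)
    (h2 : d ≤ n - d) (f : MvPolynomial (Fin n) K)
    (hf : f ∈ Submodule.span K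
      (Set.range (fun T : TwoRowTab n (n - d) d Finset.univ => spechtPoly K T)))
    (hf0 : f ≠ 0) :
    ∃ m : Fin n →₀ ℕ, IsInitMonomial f m ∧
      ∃! T : TwoRowTab n (n - d) d Finset.univ,
        IsStandard2 T ∧ IsInitMonomial (spechtPoly K T) m := by
  have hfW := Submodule.span_le.2
    (Set.range_subset_iff.2 (TwoRowTab.spechtPoly_mem_span_isStandard2 K h2)) hf
  obtain ⟨T, hT⟩ := (lexOrder n).exists_degree_eq_of_mem_span
    (fun T => T.1.spechtPoly_ne_zero K) (TwoRowTab.degree_spechtPoly_injective K) hfW hf0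
  refine ⟨_, isInitMonomial_iff.2 ⟨hf0, rfl⟩, T.1,
    ⟨T.2, isInitMonomial_iff.2 ⟨T.1.spechtPoly_ne_zero K, hT.symm⟩⟩, ?_⟩
  rintro T' ⟨hT', hinit⟩
  exact congrArg Subtype.val (TwoRowTab.degree_spechtPoly_injective K (a₁ := ⟨T', hT'⟩)
    ((isInitMonomial_iff.1 hinit).2.trans hT))

/-- every nonzero element `f` of the Specht module `V_{(n-d,d)}`
(the `K`-span of the Specht polynomials of shape `(n-d, d)`) has an initial monomial,
and there is a unique standard tableau `T` of shape `(n-d, d)` with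
`init f = init (f_T)` (lexicographic order with `x_n ≻ ⋯ ≻ x_1`). -/
theorem initMonomial_mem_spechtModule (K : Type) [Field K] (n d : ℕ) (h1 : 1 ≤ d)
    (h2 : d ≤ n - d) (f : MvPolynomial (Fin n) K)
    (hf : f ∈ Submodule.span K
      (Set.range (fun T : TwoRowTab n (n - d) d Finset.univ => spechtPoly K T)))
    (hf0 : f ≠ 0) :
    ∃ m : Fin n →₀ ℕ, IsInitMonomial f m ∧
      ∃! T : TwoRowTab n (n - d) d Finset.univ,
        IsStandard2 T ∧ IsInitMonomial (spechtPoly K T) m :=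
  initMonomial_mem_spechtModule_general K n d h2 f hf hf0
end

section
/- Let K be a field, d ≥ 1, and n = 2d. Let F ⊆ {1,…,n} with c := #F ≤ d, let x^a ∈ R be a monomial with supp(x^a) = F, and let T′ be any Young tableau of shape (d, d−c) filled bijectively with the letters {1,…,n}∖F. Then there exists a Young tableau T of shape (d, d) (with letter set {1,…,n}) such that trm(x^a f_T) = x^a · x^F · f_{T′}. -/
open MvPolynomial

section Aux
variable {K : Type} [Field K] {n : ℕ}

lemma nat_support_add (x y : Fin n →₀ ℕ) : (x + y).support = x.support ∪ y.support := by
  ext i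
  simp only [Finset.mem_union, Finsupp.mem_support_iff, Finsupp.add_apply]
  omega

lemma trm_coeff (d : ℕ) (f : MvPolynomial (Fin n) K) (m : Fin n →₀ ℕ) :
    coeff m (trm d f) = if m.support.card ≤ d then coeff m f else 0 := by
  classical
  unfold trm
  rw [coeff_sum]
  by_cases hm : m ∈ f.support
  · rw [Finset.sum_eq_single m]
    · split <;> simp [coeff_monomial]
    · intro b _ hbm
      split <;> simp [coeff_monomial, hbm]
    · intro h; exact absurd hm h
  · have h0 : coeff m f = 0 := by rwa [MvPolynomial.notMem_support_iff] at hm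
    rw [Finset.sum_eq_zero, h0, ite_self]
    intro b hb
    have hbm : b ≠ m := fun h => hm (h ▸ hb)
    split <;> simp [coeff_monomial, hbm]

lemma trm_eq_self {d : ℕ} {f : MvPolynomial (Fin n) K}
    (h : ∀ m ∈ f.support, m.support.card ≤ d) : trm d f = f := by
  ext m
  rw [trm_coeff]
  split
  · rfl
  · rename_i hc
    by_contra h0
    exact hc (h m (by simpa [MvPolynomial.mem_support_iff] using Ne.symm h0))

lemma trm_eq_zero {d : ℕ} {f : MvPolynomial (Fin n) K}
    (h : ∀ m ∈ f.support, d < m.support.card) : trm d f = 0 := by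
  ext m
  rw [trm_coeff]
  split
  · rename_i hc
    rw [coeff_zero]
    by_contra h0
    exact absurd (h m (by simpa [MvPolynomial.mem_support_iff] using h0)) (by omega)
  · simp

lemma trm_add (d : ℕ) (f g : MvPolynomial (Fin n) K) :
    trm d (f + g) = trm d f + trm d g := by
  ext m
  simp only [coeff_add, trm_coeff]
  split <;> simp

lemma trm_zero (d : ℕ) : trm d (0 : MvPolynomial (Fin n) K) = 0 := by
  ext m; rw [trm_coeff]; simp

lemma trm_sum {ι : Type*} (d : ℕ) (s : Finset ι) (f : ι → MvPolynomial (Fin n) K) :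
    trm d (∑ i ∈ s, f i) = ∑ i ∈ s, trm d (f i) := by
  classical
  induction s using Finset.induction_on with
  | empty => simp [trm_zero]
  | insert a s hx ih => rw [Finset.sum_insert hx, trm_add, ih, Finset.sum_insert hx]

lemma X_eq_monomial (w : Fin n) :
    (X w : MvPolynomial (Fin n) K) = monomial (Finsupp.single w 1) 1 := rfl

lemma prod_monomial {ι : Type*} (s : Finset ι) (f : ι → (Fin n →₀ ℕ)) (g : ι → K) :
    (∏ j ∈ s, (monomial (f j) (g j) : MvPolynomial (Fin n) K))
      = monomial (∑ j ∈ s, f j) (∏ j ∈ s, g j) := by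
  classical
  induction s using Finset.induction_on with
  | empty => simp
  | insert c s hx ih =>
      rw [Finset.prod_insert hx, ih, Finset.sum_insert hx, Finset.prod_insert hx, monomial_mul]

lemma prod_X_eq {ι : Type*} (s : Finset ι) (w : ι → Fin n) :
    (∏ j ∈ s, (X (w j) : MvPolynomial (Fin n) K))
      = monomial (∑ j ∈ s, Finsupp.single (w j) 1) 1 := by
  have : ∀ j : ι, (X (w j) : MvPolynomial (Fin n) K) = monomial (Finsupp.single (w j) 1) 1 :=
    fun j => rfl
  rw [Finset.prod_congr rfl (fun j _ => this j), prod_monomial]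
  simp

lemma support_prod_sub {ι : Type*} [DecidableEq ι] (s : Finset ι) (u v : ι → Fin n)
    (hu : ∀ k ∈ s, ∀ k' ∈ s, u k = u k' → k = k')
    (hv : ∀ k ∈ s, ∀ k' ∈ s, v k = v k' → k = k')
    (huv : ∀ k ∈ s, ∀ k' ∈ s, u k ≠ v k') :
    ∀ m ∈ (∏ k ∈ s, (X (u k) - X (v k) : MvPolynomial (Fin n) K)).support,
      m.support.card = s.card ∧
        ∀ i ∈ m.support, (∃ k ∈ s, u k = i) ∨ (∃ k ∈ s, v k = i) := by
  classical
  induction s using Finset.induction_on with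
  | empty =>
      intro m hm
      rw [Finset.prod_empty] at hm
      have : m = 0 := by
        by_contra h0
        have := MvPolynomial.mem_support_iff.mp hm
        rw [coeff_one] at this
        simp [Ne.symm h0] at this
      subst this
      simp
  | insert c s hx ih =>
      intro m hm
      rw [Finset.prod_insert hx] at hm
      have hsub := MvPolynomial.support_mul _ _ hm
      rw [Finset.mem_add] at hsub
      obtain ⟨m1, hm1, m2, hm2, hsum⟩ := hsub
      have hm1' : m1 = Finsupp.single (u c) 1 ∨ m1 = Finsupp.single (v c) 1 := by
        have hco := MvPolynomial.mem_support_iff.mp hm1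
        rw [coeff_sub] at hco
        rcases ne_or_eq (coeff m1 (X (u c) : MvPolynomial (Fin n) K)) 0 with h | h
        · left
          have := MvPolynomial.mem_support_iff.mpr h
          rw [MvPolynomial.support_X] at this
          simpa using this
        · right
          rw [h, zero_sub, neg_ne_zero] at hco
          have := MvPolynomial.mem_support_iff.mpr hco
          rw [MvPolynomial.support_X] at this
          simpa using this
      have hih := ih (fun k hk k' hk' => hu k (Finset.mem_insert_of_mem hk) k' (Finset.mem_insert_of_mem hk'))
        (fun k hk k' hk' => hv k (Finset.mem_insert_of_mem hk) k' (Finset.mem_insert_of_mem hk'))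
        (fun k hk k' hk' => huv k (Finset.mem_insert_of_mem hk) k' (Finset.mem_insert_of_mem hk'))
        m2 hm2
      obtain ⟨hcard2, hmem2⟩ := hih
      have key : ∀ w : Fin n, (w = u c ∨ w = v c) → m1 = Finsupp.single w 1 →
          m.support.card = (insert c s).card ∧
            ∀ i ∈ m.support, (∃ k ∈ insert c s, u k = i) ∨ (∃ k ∈ insert c s, v k = i) := by
        intro w hw hm1w
        have hwns : w ∉ m2.support := by
          intro hws
          rcases hmem2 w hws with ⟨k, hk, hk2⟩ | ⟨k, hk, hk2⟩
          · rcases hw with h | h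
            · exact hx (hu k (Finset.mem_insert_of_mem hk) c (Finset.mem_insert_self c s) (by rw [hk2, h]) ▸ hk)
            · exact huv k (Finset.mem_insert_of_mem hk) c (Finset.mem_insert_self c s) (by rw [hk2, h])
          · rcases hw with h | h
            · exact huv c (Finset.mem_insert_self c s) k (Finset.mem_insert_of_mem hk) (by rw [hk2, h])
            · exact hx (hv k (Finset.mem_insert_of_mem hk) c (Finset.mem_insert_self c s) (by rw [hk2, h]) ▸ hk)
        have hsupp : m.support = insert w m2.support := by
          rw [← hsum, hm1w, nat_support_add, Finsupp.support_single_ne_zero _ one_ne_zero]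
          ext i; simp [Finset.mem_insert]
        constructor
        · rw [hsupp, Finset.card_insert_of_notMem hwns, hcard2, Finset.card_insert_of_notMem hx]
        · intro i hi
          rw [hsupp, Finset.mem_insert] at hi
          rcases hi with rfl | hi
          · rcases hw with rfl | rfl
            · exact Or.inl ⟨c, Finset.mem_insert_self c s, rfl⟩
            · exact Or.inr ⟨c, Finset.mem_insert_self c s, rfl⟩
          · rcases hmem2 i hi with ⟨k, hk, hk2⟩ | ⟨k, hk, hk2⟩
            · exact Or.inl ⟨k, Finset.mem_insert_of_mem hk, hk2⟩
            · exact Or.inr ⟨k, Finset.mem_insert_of_mem hk, hk2⟩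
      rcases hm1' with h | h
      · exact key (u c) (Or.inl rfl) h
      · exact key (v c) (Or.inr rfl) h

end Aux

lemma trm_key {K : Type} [Field K] {n : ℕ} (d b c : ℕ) (hbc : b + c = d)
    (a : Fin n →₀ ℕ) (F : Finset (Fin n)) (haF : a.support = F)
    (u v : Fin b → Fin n) (e t : Fin c → Fin n)
    (himg : Finset.univ.image e = F)
    (he_inj : Function.Injective e)
    (hu : Function.Injective u) (hv : Function.Injective v) (ht : Function.Injective t)
    (huv : ∀ k k', u k ≠ v k') (hut : ∀ k j, u k ≠ t j) (hvt : ∀ k j, v k ≠ t j)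
    (huF : ∀ k, u k ∉ F) (hvF : ∀ k, v k ∉ F) (htF : ∀ j, t j ∉ F) :
    trm d (monomial a (1 : K) *
        ((∏ k : Fin b, (X (u k) - X (v k))) * ∏ j : Fin c, (X (e j) - X (t j))))
      = monomial a (1 : K) * (∏ i ∈ F, X i) * ∏ k : Fin b, (X (u k) - X (v k)) := by
  classical
  set P : MvPolynomial (Fin n) K := ∏ k : Fin b, (X (u k) - X (v k)) with hPdef
  have hcF : F.card = c := by
    rw [← himg, Finset.card_image_of_injective _ he_inj, Finset.card_univ, Fintype.card_fin]
  have hP : ∀ m ∈ P.support, m.support.card = b ∧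
      ∀ i ∈ m.support, (∃ k, u k = i) ∨ (∃ k, v k = i) := by
    intro m hm
    have hkey := support_prod_sub Finset.univ u v
      (fun k _ k' _ h => hu h) (fun k _ k' _ h => hv h) (fun k _ k' _ => huv k k') m hm
    refine ⟨hkey.1.trans (by rw [Finset.card_univ, Fintype.card_fin]), ?_⟩
    intro i hi
    rcases hkey.2 i hi with ⟨k, _, hk⟩ | ⟨k, _, hk⟩
    · exact Or.inl ⟨k, hk⟩
    · exact Or.inr ⟨k, hk⟩
  have hQ : (∏ j : Fin c, (X (e j) - X (t j) : MvPolynomial (Fin n) K))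
      = ∑ S ∈ (Finset.univ : Finset (Fin c)).powerset,
          (∏ j ∈ S, X (e j)) * ∏ j ∈ Finset.univ \ S, -(X (t j)) := by
    simp_rw [sub_eq_add_neg]
    exact Finset.prod_add _ _ _
  rw [hQ, Finset.mul_sum, Finset.mul_sum, trm_sum,
    Finset.sum_eq_single_of_mem Finset.univ (Finset.mem_powerset_self _)]
  · -- main term, S = univ
    rw [Finset.sdiff_self, Finset.prod_empty, mul_one]
    set gE : Fin n →₀ ℕ := ∑ j ∈ (Finset.univ : Finset (Fin c)), Finsupp.single (e j) 1 with hgEdef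
    have hXE : (∏ j ∈ (Finset.univ : Finset (Fin c)), (X (e j) : MvPolynomial (Fin n) K))
        = monomial gE 1 := prod_X_eq _ _
    have hgEsupp : gE.support ⊆ F := by
      intro i hi
      rw [Finsupp.mem_support_iff, hgEdef, Finsupp.finset_sum_apply] at hi
      obtain ⟨j, _, hj⟩ := Finset.exists_ne_zero_of_sum_ne_zero hi
      rcases eq_or_ne (e j) i with h | h
      · rw [← h, ← himg]; exact Finset.mem_image_of_mem e (Finset.mem_univ j)
      · simp [Finsupp.single_apply, h] at hj
    have heq1 : monomial a (1 : K) * (P * monomial gE 1) = monomial (a + gE) 1 * P := by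
      calc monomial a (1 : K) * (P * monomial gE 1)
          = monomial a 1 * monomial gE 1 * P := by ring
        _ = monomial (a + gE) 1 * P := by rw [monomial_mul, mul_one]
    rw [hXE, heq1]
    have hbound : ∀ m ∈ (monomial (a + gE) (1 : K) * P).support, m.support.card ≤ d := by
      intro m hm
      have hsub := MvPolynomial.support_mul _ _ hm
      rw [Finset.mem_add] at hsub
      obtain ⟨m1, hm1, m2, hm2, rfl⟩ := hsub
      rw [MvPolynomial.support_monomial, if_neg (one_ne_zero : (1:K) ≠ 0),
        Finset.mem_singleton] at hm1
      subst hm1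
      have hsupp : ((a + gE) + m2).support ⊆ F ∪ m2.support := by
        rw [nat_support_add, nat_support_add, haF]
        intro i hi
        simp only [Finset.mem_union] at hi ⊢
        rcases hi with (hi | hi) | hi
        · exact Or.inl hi
        · exact Or.inl (hgEsupp hi)
        · exact Or.inr hi
      calc ((a + gE) + m2).support.card ≤ (F ∪ m2.support).card := Finset.card_le_card hsupp
        _ ≤ F.card + m2.support.card := Finset.card_union_le _ _
        _ ≤ d := by rw [hcF, (hP m2 hm2).1]; omega
    rw [trm_eq_self hbound, ← himg, Finset.prod_image (fun x _ y _ h => he_inj h), hXE,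
      monomial_mul, mul_one]
  · -- vanishing terms
    intro S hSp hSne
    set cS := ((Finset.univ : Finset (Fin c)) \ S).card with hcSdef
    set g1 : Fin n →₀ ℕ := ∑ j ∈ S, Finsupp.single (e j) 1 with hg1def
    set g2 : Fin n →₀ ℕ := ∑ j ∈ (Finset.univ : Finset (Fin c)) \ S, Finsupp.single (t j) 1
      with hg2def
    have hXE : (∏ j ∈ S, (X (e j) : MvPolynomial (Fin n) K)) = monomial g1 1 := prod_X_eq _ _
    have hXT : (∏ j ∈ (Finset.univ : Finset (Fin c)) \ S, -(X (t j) : MvPolynomial (Fin n) K))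
        = monomial g2 ((-1 : K) ^ cS) := by
      have h1 : ∀ j ∈ (Finset.univ : Finset (Fin c)) \ S,
          -(X (t j) : MvPolynomial (Fin n) K) = monomial (Finsupp.single (t j) 1) (-1 : K) := by
        intro j _
        rw [X_eq_monomial, ← map_neg]
      rw [Finset.prod_congr rfl h1, prod_monomial, Finset.prod_const]
    have hr : ((-1 : K) ^ cS) ≠ 0 := pow_ne_zero _ (neg_ne_zero.mpr one_ne_zero)
    have hterm : monomial a (1 : K) *
          (P * ((∏ j ∈ S, X (e j)) * ∏ j ∈ (Finset.univ : Finset (Fin c)) \ S, -(X (t j))))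
        = monomial (a + g1 + g2) ((-1 : K) ^ cS) * P := by
      rw [hXE, hXT]
      calc monomial a (1 : K) * (P * (monomial g1 1 * monomial g2 ((-1 : K) ^ cS)))
          = monomial a 1 * monomial g1 1 * monomial g2 ((-1 : K) ^ cS) * P := by ring
        _ = monomial (a + g1 + g2) ((-1 : K) ^ cS) * P := by
            rw [monomial_mul, mul_one, monomial_mul, one_mul]
    rw [hterm]
    apply trm_eq_zero
    intro m hm
    have hsub := MvPolynomial.support_mul _ _ hm
    rw [Finset.mem_add] at hsub
    obtain ⟨m1, hm1, m2, hm2, rfl⟩ := hsub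
    rw [MvPolynomial.support_monomial, if_neg hr, Finset.mem_singleton] at hm1
    subst hm1
    -- memberships in the support of the big monomial
    have happ : ∀ i, ((a + g1 + g2) + m2) i = a i + g1 i + g2 i + m2 i := by
      intro i; simp [Finsupp.add_apply]
    have hFsub : F ⊆ ((a + g1 + g2) + m2).support := by
      intro i hi
      have hai : a i ≠ 0 := Finsupp.mem_support_iff.mp (haF.symm ▸ hi)
      rw [Finsupp.mem_support_iff, happ i]
      omega
    have hg2t : ∀ j ∈ (Finset.univ : Finset (Fin c)) \ S, g2 (t j) ≠ 0 := by
      intro j hj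
      rw [hg2def, Finsupp.finset_sum_apply]
      intro h0
      rw [Finset.sum_eq_zero_iff] at h0
      have := h0 j hj
      rw [Finsupp.single_eq_same] at this
      exact one_ne_zero this
    set Tset := ((Finset.univ : Finset (Fin c)) \ S).image t with hTdef
    have hTm : Tset ⊆ ((a + g1 + g2) + m2).support := by
      intro i hi
      obtain ⟨j, hj, rfl⟩ := Finset.mem_image.mp hi
      have := hg2t j hj
      rw [Finsupp.mem_support_iff, happ]
      omega
    have hm2sub : m2.support ⊆ ((a + g1 + g2) + m2).support := by
      intro i hi
      have : m2 i ≠ 0 := Finsupp.mem_support_iff.mp hi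
      rw [Finsupp.mem_support_iff, happ]
      omega
    have hm2FT : ∀ i ∈ m2.support, i ∉ F ∧ i ∉ Tset := by
      intro i hi
      rcases (hP m2 hm2).2 i hi with ⟨k, rfl⟩ | ⟨k, rfl⟩
      · refine ⟨huF k, fun hiT => ?_⟩
        obtain ⟨j, _, hj2⟩ := Finset.mem_image.mp hiT
        exact hut k j hj2.symm
      · refine ⟨hvF k, fun hiT => ?_⟩
        obtain ⟨j, _, hj2⟩ := Finset.mem_image.mp hiT
        exact hvt k j hj2.symm
    have d1 : Disjoint F Tset := by
      rw [Finset.disjoint_right]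
      intro i hiT hiF
      obtain ⟨j, _, rfl⟩ := Finset.mem_image.mp hiT
      exact htF j hiF
    have d2 : Disjoint F m2.support :=
      Finset.disjoint_right.mpr fun i hi => (hm2FT i hi).1
    have d3 : Disjoint Tset m2.support :=
      Finset.disjoint_right.mpr fun i hi => (hm2FT i hi).2
    have hcardU : (F ∪ Tset ∪ m2.support).card = F.card + Tset.card + m2.support.card := by
      rw [Finset.card_union_of_disjoint (Finset.disjoint_union_left.mpr ⟨d2, d3⟩),
        Finset.card_union_of_disjoint d1]
    have hsubU : F ∪ Tset ∪ m2.support ⊆ ((a + g1 + g2) + m2).support :=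
      Finset.union_subset (Finset.union_subset hFsub hTm) hm2sub
    have hble := Finset.card_le_card hsubU
    have hTcard : Tset.card = cS := by
      rw [hTdef, Finset.card_image_of_injective _ ht]
    have hScard : S.card < c := by
      have hss : S ⊂ Finset.univ := Finset.ssubset_univ_iff.mpr hSne
      have := Finset.card_lt_card hss
      rwa [Finset.card_univ, Fintype.card_fin] at this
    have hsd : cS = c - S.card := by
      rw [hcSdef, Finset.card_sdiff_of_subset (Finset.subset_univ S), Finset.card_univ, Fintype.card_fin]
    have hm2c := (hP m2 hm2).1
    omega


lemma spechtPoly_dd {K : Type} [Field K] {n d : ℕ} {S : Finset (Fin n)}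
    (T : TwoRowTab n d d S) :
    spechtPoly K T = ∏ k : Fin d, (X (T.top k) - X (T.bot k)) := rfl

def EE (d c : ℕ) (h : c ≤ d) : Fin (d - c) ⊕ Fin c ≃ Fin d :=
  finSumFinEquiv.trans (finCongr (Nat.sub_add_cancel h))

lemma EE_inr_val (d c : ℕ) (h : c ≤ d) (j : Fin c) :
    ((EE d c h (Sum.inr j)) : ℕ) = (d - c) + (j : ℕ) := by
  simp [EE]

noncomputable def eF {n : ℕ} (F : Finset (Fin n)) : Fin F.card → Fin n :=
  fun j => ↑(F.orderIsoOfFin rfl j)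

lemma eF_inj {n : ℕ} (F : Finset (Fin n)) : Function.Injective (eF F) :=
  fun j j' h => (F.orderIsoOfFin rfl).injective (Subtype.coe_injective h)

lemma eF_img {n : ℕ} (F : Finset (Fin n)) : Finset.univ.image (eF F) = F := by
  ext i
  simp only [Finset.mem_image, Finset.mem_univ, true_and]
  constructor
  · rintro ⟨j, rfl⟩; exact (F.orderIsoOfFin rfl j).2
  · intro hi; exact ⟨(F.orderIsoOfFin rfl).symm ⟨i, hi⟩, by simp [eF]⟩

lemma eF_mem {n : ℕ} (F : Finset (Fin n)) (j : Fin F.card) : eF F j ∈ F :=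
  (F.orderIsoOfFin rfl j).2

section Constr
variable {n d : ℕ} (F : Finset (Fin n)) (hF : F.card ≤ d)
  (T' : TwoRowTab n d (d - F.card) (Finset.univ \ F))

noncomputable def tF : Fin F.card → Fin n :=
  fun j => T'.top (EE d F.card hF (Sum.inr j))

noncomputable def uF : Fin (d - F.card) → Fin n :=
  fun i => T'.top (Fin.castLE T'.hba i)

noncomputable def topf : Fin d → Fin n :=
  fun k => Sum.elim (uF F T') (eF F) ((EE d F.card hF).symm k)

noncomputable def botf : Fin d → Fin n :=
  fun k => Sum.elim T'.bot (tF F hF T') ((EE d F.card hF).symm k)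

end Constr

lemma elim_inj {n dc c : ℕ} (u : Fin dc → Fin n) (e : Fin c → Fin n)
    (v : Fin dc → Fin n) (t : Fin c → Fin n)
    (hu : Function.Injective u) (he : Function.Injective e)
    (hv : Function.Injective v) (ht : Function.Injective t)
    (huv : ∀ i i', u i ≠ v i') (hue : ∀ i j, u i ≠ e j) (hut : ∀ i j, u i ≠ t j)
    (hev : ∀ j i, e j ≠ v i) (het : ∀ j j', e j ≠ t j') (hvt : ∀ i j, v i ≠ t j) :
    Function.Injective (Sum.elim (Sum.elim u e) (Sum.elim v t)) := by
  rintro ((i | j) | (i | j)) ((i' | j') | (i' | j')) h <;>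
    simp only [Sum.elim_inl, Sum.elim_inr] at h
  · simp [hu h]
  · exact absurd h (hue i j')
  · exact absurd h (huv i i')
  · exact absurd h (hut i j')
  · exact absurd h.symm (hue i' j)
  · simp [he h]
  · exact absurd h (hev j i')
  · exact absurd h (het j j')
  · exact absurd h.symm (huv i' i)
  · exact absurd h.symm (hev j' i)
  · simp [hv h]
  · exact absurd h (hvt i j')
  · exact absurd h.symm (hut i' j)
  · exact absurd h.symm (het j' j)
  · exact absurd h.symm (hvt i' j)
  · simp [ht h]


/-- converse of Statement 5: let `n = 2d`, `F ⊆ [n]` with `c := #F ≤ d`,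
`x^a` a monomial with support `F`, and `T'` a tableau of shape `(d, d - c)` with letter
set `[n] \ F`.  Then there is a tableau `T` of shape `(d, d)` (letter set `[n]`) with
`trm (x^a f_T) = x^a ⬝ x^F ⬝ f_{T'}`. -/
theorem exists_trm_eq (K : Type) [Field K] (d : ℕ) (hd : 1 ≤ d) (n : ℕ) (hn : n = 2 * d)
    (F : Finset (Fin n)) (hF : F.card ≤ d) (a : Fin n →₀ ℕ) (ha : a.support = F)
    (T' : TwoRowTab n d (d - F.card) (Finset.univ \ F)) :
    ∃ T : TwoRowTab n d d Finset.univ,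
      trm d (monomial a (1 : K) * spechtPoly K T)
        = monomial a (1 : K) * (∏ i ∈ F, X i) * spechtPoly K T' := by
  classical
  have htop_inj : Function.Injective T'.top := fun k k' h => by
    simpa using T'.inj (a₁ := Sum.inl k) (a₂ := Sum.inl k') h
  have hbot_inj : Function.Injective T'.bot := fun k k' h => by
    simpa using T'.inj (a₁ := Sum.inr k) (a₂ := Sum.inr k') h
  have htb : ∀ k k', T'.top k ≠ T'.bot k' := fun k k' h => by
    simpa using T'.inj (a₁ := Sum.inl k) (a₂ := Sum.inr k') h
  have htopF : ∀ k, T'.top k ∉ F := fun k =>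
    (Finset.mem_sdiff.mp ((T'.range_eq (T'.top k)).mpr ⟨Sum.inl k, rfl⟩)).2
  have hbotF : ∀ k, T'.bot k ∉ F := fun k =>
    (Finset.mem_sdiff.mp ((T'.range_eq (T'.bot k)).mpr ⟨Sum.inr k, rfl⟩)).2
  have hu : Function.Injective (uF F T') := fun i i' h =>
    Fin.castLE_injective _ (htop_inj h)
  have he := eF_inj F
  have ht : Function.Injective (tF F hF T') := fun j j' h => by
    have h2 := (EE d F.card hF).injective (htop_inj h)
    simpa using h2
  have hue : ∀ i j, uF F T' i ≠ eF F j := fun i j h => by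
    have hm := eF_mem F j
    rw [← h] at hm
    exact htopF (Fin.castLE T'.hba i) hm
  have huv : ∀ i i', uF F T' i ≠ T'.bot i' := fun i i' => htb _ _
  have hut : ∀ i j, uF F T' i ≠ tF F hF T' j := fun i j h => by
    have h2 := htop_inj h
    have h3 := congrArg Fin.val h2
    rw [Fin.coe_castLE, EE_inr_val] at h3
    have := i.2
    omega
  have hev : ∀ j i, eF F j ≠ T'.bot i := fun j i h => by
    have hm := eF_mem F j
    rw [h] at hm
    exact hbotF i hm
  have het : ∀ j j', eF F j ≠ tF F hF T' j' := fun j j' h => by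
    have hm := eF_mem F j
    rw [h] at hm
    exact htopF _ hm
  have hvt : ∀ i j, T'.bot i ≠ tF F hF T' j := fun i j h => htb _ i h.symm
  have hinj : Function.Injective (Sum.elim (topf F hF T') (botf F hF T')) := by
    have hAB := elim_inj (uF F T') (eF F) T'.bot (tF F hF T')
      hu he hbot_inj ht huv hue hut hev het hvt
    have hcomp : Sum.elim (topf F hF T') (botf F hF T')
        = (Sum.elim (Sum.elim (uF F T') (eF F)) (Sum.elim T'.bot (tF F hF T')))
            ∘ Sum.map (EE d F.card hF).symm (EE d F.card hF).symm := by
      funext x; cases x <;> rfl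
    rw [hcomp]
    exact hAB.comp ((Equiv.injective _).sumMap (Equiv.injective _))
  have hsurj : Function.Surjective (Sum.elim (topf F hF T') (botf F hF T')) := by
    have hcard : Fintype.card (Fin d ⊕ Fin d) = Fintype.card (Fin n) := by
      simp; omega
    exact ((Fintype.bijective_iff_injective_and_card _).mpr ⟨hinj, hcard⟩).2
  refine ⟨⟨le_rfl, topf F hF T', botf F hF T', hinj,
    fun s => ⟨fun _ => hsurj s, fun _ => Finset.mem_univ s⟩⟩, ?_⟩
  rw [spechtPoly_dd]
  show trm d (monomial a (1 : K) *
      ∏ k : Fin d, (X (topf F hF T' k) - X (botf F hF T' k)))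
    = monomial a (1 : K) * (∏ i ∈ F, X i) * spechtPoly K T'
  have hprod : (∏ k : Fin d, (X (topf F hF T' k) - X (botf F hF T' k) : MvPolynomial (Fin n) K))
      = (∏ i : Fin (d - F.card), (X (uF F T' i) - X (T'.bot i)))
        * ∏ j : Fin F.card, (X (eF F j) - X (tF F hF T' j)) := by
    rw [← Equiv.prod_comp (EE d F.card hF)
      (fun k => (X (topf F hF T' k) - X (botf F hF T' k) : MvPolynomial (Fin n) K))]
    rw [Fintype.prod_sum_type]
    congr 1
    · exact Finset.prod_congr rfl fun i _ => by simp [topf, botf]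
    · exact Finset.prod_congr rfl fun j _ => by simp [topf, botf]
  rw [hprod]
  have hsp' : spechtPoly K T'
      = ∏ k : Fin (d - F.card), (X (uF F T' k) - X (T'.bot k)) := rfl
  rw [hsp']
  exact trm_key d (d - F.card) F.card (Nat.sub_add_cancel hF) a F ha
    (uF F T') T'.bot (eF F) (tF F hF T') (eF_img F) he hu hbot_inj ht
    huv hut hvt (fun k => htopF (Fin.castLE T'.hba k)) hbotF
    (fun j => htopF (EE d F.card hF (Sum.inr j)))
end

section
/- Let K be a field and n, d integers with d ≥ 2 and n − d ≥ d. Let T be a Young tableau of shape (n−d, d−1) filled bijectively with the letters 1,…,n−1, and let f_T ∈ S = K[x_1,…,x_{n−1}] be its Specht polynomial. Then for every m ≥ 1, f_T · x_n^m ∈ S + I^Sp_{(n−d,d)}, where S + I^Sp_{(n−d,d)} denotes the sum inside R = K[x_1,…,x_n] of the subring S and the Specht ideal I^Sp_{(n−d,d)} ⊆ R. -/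
open MvPolynomial

open MvPolynomial

/-- Extend a two-row tableau on letters `1,…,n-1` of shape `(n-(e+1), e)` to a tableau
on letters `1,…,n` of shape `(n-(e+1), e+1)` by placing `n` at the end of the second row. -/
noncomputable def extendTab (n e : ℕ) (h2 : e + 1 ≤ n - (e + 1))
    (T : TwoRowTab (n - 1) (n - (e + 1)) e Finset.univ) :
    TwoRowTab n (n - (e + 1)) (e + 1) Finset.univ where
  hba := by omega
  top := fun k => Fin.castLE (n.sub_le 1) (T.top k)
  bot := Fin.snoc (fun k => Fin.castLE (n.sub_le 1) (T.bot k)) ⟨n - 1, by omega⟩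
  inj := by
    have hne : ∀ i : Fin (n - 1),
        Fin.castLE (n.sub_le 1) i ≠ (⟨n - 1, by omega⟩ : Fin n) := by
      intro i h
      have h2 := congrArg Fin.val h
      have := i.isLt
      simp [Fin.coe_castLE] at h2
      omega
    have hinj : Function.Injective (Fin.castLE (n.sub_le 1)) := Fin.castLE_injective _
    rintro (k | k) (l | l) hab
    · simp only [Sum.elim_inl] at hab
      have := T.inj (a₁ := Sum.inl k) (a₂ := Sum.inl l) (by simpa using hinj hab)
      simp only [Sum.inl.injEq] at this ⊢
      exact this
    · rcases Fin.eq_castSucc_or_eq_last l with ⟨l', rfl⟩ | rfl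
      · simp only [Sum.elim_inl, Sum.elim_inr, Fin.snoc_castSucc] at hab
        have := T.inj (a₁ := Sum.inl k) (a₂ := Sum.inr l') (by simpa using hinj hab)
        simp at this
      · simp only [Sum.elim_inl, Sum.elim_inr, Fin.snoc_last] at hab
        exact absurd hab (hne _)
    · rcases Fin.eq_castSucc_or_eq_last k with ⟨k', rfl⟩ | rfl
      · simp only [Sum.elim_inl, Sum.elim_inr, Fin.snoc_castSucc] at hab
        have := T.inj (a₁ := Sum.inr k') (a₂ := Sum.inl l) (by simpa using hinj hab)
        simp at this
      · simp only [Sum.elim_inl, Sum.elim_inr, Fin.snoc_last] at hab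
        exact absurd hab.symm (hne _)
    · rcases Fin.eq_castSucc_or_eq_last k with ⟨k', rfl⟩ | rfl <;>
        rcases Fin.eq_castSucc_or_eq_last l with ⟨l', rfl⟩ | rfl
      · simp only [Sum.elim_inr, Fin.snoc_castSucc] at hab
        have := T.inj (a₁ := Sum.inr k') (a₂ := Sum.inr l') (by simpa using hinj hab)
        simp only [Sum.inr.injEq] at this ⊢
        exact congrArg Fin.castSucc this
      · simp only [Sum.elim_inr, Fin.snoc_castSucc, Fin.snoc_last] at hab
        exact absurd hab (hne _)
      · simp only [Sum.elim_inr, Fin.snoc_castSucc, Fin.snoc_last] at hab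
        exact absurd hab.symm (hne _)
      · rfl
  range_eq := by
    intro s
    simp only [Finset.mem_univ, true_iff]
    by_cases hs : (s : ℕ) < n - 1
    · obtain ⟨x, hx⟩ := (T.range_eq ⟨s, hs⟩).mp (Finset.mem_univ _)
      rcases x with k | k
      · refine ⟨Sum.inl k, ?_⟩
        simp only [Sum.elim_inl] at hx ⊢
        rw [hx]
        rfl
      · refine ⟨Sum.inr k.castSucc, ?_⟩
        simp only [Sum.elim_inr, Fin.snoc_castSucc] at hx ⊢
        rw [hx]
        rfl
    · refine ⟨Sum.inr (Fin.last e), ?_⟩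
      simp only [Sum.elim_inr, Fin.snoc_last]
      have := s.isLt
      exact Fin.ext (by simp; omega)

lemma spechtPoly_extendTab (K : Type) [Field K] (n e : ℕ) (h2 : e + 1 ≤ n - (e + 1))
    (T : TwoRowTab (n - 1) (n - (e + 1)) e Finset.univ) :
    spechtPoly K (extendTab n e h2 T)
      = rename (Fin.castLE (n.sub_le 1)) (spechtPoly K T)
        * (X (Fin.castLE (n.sub_le 1) (T.top ⟨e, by omega⟩))
            - X (⟨n - 1, by omega⟩ : Fin n)) := by
  unfold spechtPoly extendTab
  rw [Fin.prod_univ_castSucc, map_prod]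
  congr 1
  · apply Finset.prod_congr rfl
    intro k _
    simp only [Fin.snoc_castSucc, map_sub, rename_X]
    congr 2
  · simp only [Fin.snoc_last, map_sub, rename_X]
    congr 3

lemma extendTab_mem (K : Type) [Field K] (n e : ℕ) (h2 : e + 1 ≤ n - (e + 1))
    (T : TwoRowTab (n - 1) (n - (e + 1)) e Finset.univ) :
    spechtPoly K (extendTab n e h2 T) ∈ spechtIdeal K n (n - (e + 1)) (e + 1) :=
  Ideal.subset_span ⟨_, rfl⟩

lemma key_lemma (K : Type) [Field K] (n e : ℕ) (h2 : e + 1 ≤ n - (e + 1))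
    (T : TwoRowTab (n - 1) (n - (e + 1)) e Finset.univ) (m : ℕ) (hm : 1 ≤ m)
    (s : MvPolynomial (Fin (n - 1)) K) :
    ∃ (s' : MvPolynomial (Fin (n - 1)) K) (g : MvPolynomial (Fin n) K),
      g ∈ spechtIdeal K n (n - (e + 1)) (e + 1) ∧
        rename (Fin.castLE (n.sub_le 1)) (s * spechtPoly K T)
            * X (⟨n - 1, by omega⟩ : Fin n) ^ m
          = rename (Fin.castLE (n.sub_le 1)) s' + g := by
  have hprod := spechtPoly_extendTab K n e h2 T
  have hmem := extendTab_mem K n e h2 T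
  induction m, hm using Nat.le_induction generalizing s with
  | base =>
    refine ⟨s * spechtPoly K T * X (T.top ⟨e, by omega⟩),
      -(rename (Fin.castLE (n.sub_le 1)) s * spechtPoly K (extendTab n e h2 T)),
      neg_mem (Ideal.mul_mem_left _ _ hmem), ?_⟩
    rw [hprod]
    simp only [map_mul, rename_X, pow_one]
    ring
  | succ m hm ih =>
    obtain ⟨s', g', hg', hEq⟩ := ih (s * X (T.top ⟨e, by omega⟩))
    refine ⟨s', g' - rename (Fin.castLE (n.sub_le 1)) s * spechtPoly K (extendTab n e h2 T)
        * X (⟨n - 1, by omega⟩ : Fin n) ^ m,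
      Ideal.sub_mem _ hg'
        (Ideal.mul_mem_right _ _ (Ideal.mul_mem_left _ _ hmem)), ?_⟩
    have h3 : rename (Fin.castLE (n.sub_le 1)) (s * spechtPoly K T)
          * X (⟨n - 1, by omega⟩ : Fin n) ^ (m + 1)
        = rename (Fin.castLE (n.sub_le 1)) ((s * X (T.top ⟨e, by omega⟩)) * spechtPoly K T)
              * X (⟨n - 1, by omega⟩ : Fin n) ^ m
            - rename (Fin.castLE (n.sub_le 1)) s * spechtPoly K (extendTab n e h2 T)
              * X (⟨n - 1, by omega⟩ : Fin n) ^ m := by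
      rw [hprod]
      simp only [map_mul, rename_X, pow_succ]
      ring
    rw [h3, hEq]
    ring

/-- for `d ≥ 2`, `n - d ≥ d`, a tableau `T` of shape `(n-d, d-1)` with
letters `1, …, n-1`, and every `m ≥ 1`, one has `f_T ⬝ x_n^m ∈ S + I^Sp_{(n-d,d)}`,
the sum inside `R = K[x_1, …, x_n]` of the subring `S = K[x_1, …, x_{n-1}]` and the
Specht ideal `I^Sp_{(n-d,d)}`. -/
theorem spechtPoly_mul_xn_pow_mem (K : Type) [Field K] (n d : ℕ) (h1 : 2 ≤ d)
    (h2 : d ≤ n - d) (T : TwoRowTab (n - 1) (n - d) (d - 1) Finset.univ)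
    (m : ℕ) (hm : 1 ≤ m) :
    ∃ (s : MvPolynomial (Fin (n - 1)) K) (g : MvPolynomial (Fin n) K),
      g ∈ spechtIdeal K n (n - d) d ∧
        MvPolynomial.rename (Fin.castLE (n.sub_le 1)) (spechtPoly K T)
            * X (⟨n - 1, by omega⟩ : Fin n) ^ m
          = MvPolynomial.rename (Fin.castLE (n.sub_le 1)) s + g := by

  obtain ⟨e, rfl⟩ : ∃ e, d = e + 1 := ⟨d - 1, by omega⟩
  obtain ⟨s', g, hg, h⟩ := key_lemma K n e h2 T m hm 1
  rw [one_mul] at h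
  exact ⟨s', g, hg, h⟩
end

section
/- Let K be an infinite field and n, d integers with d ≥ 2 and n − d ≥ d. If f_0, f_1, …, f_l ∈ S = K[x_1,…,x_{n−1}] satisfy Σ_{i=0}^{l} f_i x_n^i ∈ I^Sp_{(n−d,d)} (an ideal of R = K[x_1,…,x_n]), then f_i ∈ I^Sp_{(n−d,d−1)} for every i, where I^Sp_{(n−d,d−1)} ⊆ S is the Specht ideal for the partition (n−d, d−1) of n−1. -/
open MvPolynomial

section Aux

/-- Extend an injection along another injection into a set of the same size, as an equiv. -/
lemma exists_equiv_extend {α β γ : Type*} [Fintype α] [Fintype β] [Fintype γ]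
    (j : α → β) (hj : Function.Injective j) (f : α → γ) (hf : Function.Injective f)
    (hcard : Fintype.card β = Fintype.card γ) : ∃ e : β ≃ γ, ∀ a, e (j a) = f a := by
  classical
  have h1 : Fintype.card {x // x ∈ Set.range j} = Fintype.card α :=
    Fintype.card_congr (Equiv.ofInjective j hj).symm
  have h2 : Fintype.card {y // y ∈ Set.range f} = Fintype.card α :=
    Fintype.card_congr (Equiv.ofInjective f hf).symm
  have hcc : Fintype.card {x // ¬ x ∈ Set.range j} = Fintype.card {y // ¬ y ∈ Set.range f} := by
    rw [Fintype.card_subtype_compl, Fintype.card_subtype_compl, h1, h2, hcard]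
  refine ⟨((Equiv.sumCompl (· ∈ Set.range j)).symm.trans
      (Equiv.sumCongr ((Equiv.ofInjective j hj).symm.trans (Equiv.ofInjective f hf))
        (Fintype.equivOfCardEq hcc))).trans (Equiv.sumCompl (· ∈ Set.range f)), fun a => ?_⟩
  have h3 : (Equiv.sumCompl (· ∈ Set.range j)).symm (j a) = Sum.inl ⟨j a, ⟨a, rfl⟩⟩ :=
    Equiv.sumCompl_symm_apply_of_pos ⟨a, rfl⟩
  have h4 : (⟨j a, ⟨a, rfl⟩⟩ : {x // x ∈ Set.range j}) = Equiv.ofInjective j hj a := rfl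
  rw [Equiv.trans_apply, Equiv.trans_apply, h3, Equiv.sumCongr_apply]
  rw [Sum.map_inl, Equiv.trans_apply, h4, Equiv.symm_apply_apply]
  rfl

/-- Joint injectivity of the pair of rows `p`, `q` on the index set `s`. -/
def PairsInj {n : ℕ} {ι : Type*} (s : Finset ι) (p q : ι → Fin n) : Prop :=
  (∀ k ∈ s, ∀ k' ∈ s, p k = p k' → k = k') ∧
  (∀ k ∈ s, ∀ k' ∈ s, q k = q k' → k = k') ∧
  (∀ k ∈ s, ∀ k' ∈ s, p k ≠ q k')

lemma prod_mem_specht_exact (K : Type) [Field K] {n d : ℕ} (h1 : 2 ≤ d) (h2 : d ≤ n - d)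
    {ι : Type*} [DecidableEq ι] (s : Finset ι) (hcard : s.card = d - 1)
    (p q : ι → Fin (n - 1)) (hinj : PairsInj s p q) :
    (∏ k ∈ s, ((X (p k) - X (q k)) : MvPolynomial (Fin (n - 1)) K))
      ∈ spechtIdeal K (n - 1) (n - d) (d - 1) := by
  classical
  have hn : 2 * d ≤ n := by omega
  have hle : d - 1 ≤ n - d := by omega
  let e : Fin (d - 1) ≃ s := (Finset.equivFinOfCardEq hcard).symm
  set F : Fin (d - 1) ⊕ Fin (d - 1) → Fin (n - 1) :=
    Sum.elim (fun k => p (e k)) (fun k => q (e k)) with hF_def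
  have hF : Function.Injective F := by
    rintro (x | x) (y | y) hxy <;>
      simp only [hF_def, Sum.elim_inl, Sum.elim_inr] at hxy
    · exact congrArg Sum.inl (e.injective (Subtype.ext
        (hinj.1 _ (e x).2 _ (e y).2 hxy)))
    · exact absurd hxy (hinj.2.2 _ (e x).2 _ (e y).2)
    · exact absurd hxy.symm (hinj.2.2 _ (e y).2 _ (e x).2)
    · exact congrArg Sum.inr (e.injective (Subtype.ext
        (hinj.2.1 _ (e x).2 _ (e y).2 hxy)))
  set jm : Fin (d - 1) ⊕ Fin (d - 1) → Fin (n - d) ⊕ Fin (d - 1) :=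
    Sum.map (Fin.castLE hle) id with hjm_def
  have hjm : Function.Injective jm :=
    Function.Injective.sumMap (Fin.castLE_injective hle) Function.injective_id
  have hcardeq : Fintype.card (Fin (n - d) ⊕ Fin (d - 1)) = Fintype.card (Fin (n - 1)) := by
    simp only [Fintype.card_sum, Fintype.card_fin]; omega
  obtain ⟨E, hE⟩ := exists_equiv_extend jm hjm F hF hcardeq
  have hElim : ∀ x, Sum.elim (fun m => E (Sum.inl m)) (fun k => E (Sum.inr k)) x = E x := by
    rintro (x | x) <;> rfl
  let T' : TwoRowTab (n - 1) (n - d) (d - 1) Finset.univ :=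
    { hba := hle
      top := fun m => E (Sum.inl m)
      bot := fun k => E (Sum.inr k)
      inj := by
        rw [show Sum.elim (fun m => E (Sum.inl m)) (fun k => E (Sum.inr k)) = E from
          funext hElim]
        exact E.injective
      range_eq := fun t => ⟨fun _ => ⟨E.symm t, by rw [hElim]; exact E.apply_symm_apply t⟩,
        fun _ => Finset.mem_univ t⟩ }
  have key : spechtPoly K T' = ∏ k ∈ s, ((X (p k) - X (q k)) : MvPolynomial (Fin (n - 1)) K) := by
    calc spechtPoly K T'
        = ∏ i : Fin (d - 1), ((X (p (e i)) - X (q (e i))) : MvPolynomial (Fin (n - 1)) K) := by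
          refine Finset.prod_congr rfl fun i _ => ?_
          have ha := hE (Sum.inl i)
          have hb := hE (Sum.inr i)
          simp only [hjm_def, hF_def, Sum.map_inl, Sum.map_inr, Sum.elim_inl, Sum.elim_inr,
            id] at ha hb
          show (X (E (Sum.inl (Fin.castLE hle i))) - X (E (Sum.inr i)) :
            MvPolynomial (Fin (n - 1)) K) = _
          rw [ha, hb]
      _ = ∏ i : s, ((X (p i) - X (q i)) : MvPolynomial (Fin (n - 1)) K) :=
          e.prod_comp (fun i : s => ((X (p i) - X (q i)) : MvPolynomial (Fin (n - 1)) K))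
      _ = ∏ k ∈ s, ((X (p k) - X (q k)) : MvPolynomial (Fin (n - 1)) K) :=
          Finset.prod_coe_sort s (fun k => ((X (p k) - X (q k)) : MvPolynomial (Fin (n - 1)) K))
  rw [← key]
  exact Ideal.subset_span ⟨T', rfl⟩

lemma prod_mem_specht (K : Type) [Field K] {n d : ℕ} (h1 : 2 ≤ d) (h2 : d ≤ n - d)
    {ι : Type*} [DecidableEq ι] (m : ℕ) (s : Finset ι) (hcard : s.card = m)
    (hm : d - 1 ≤ m) (p q : ι → Fin (n - 1)) (hinj : PairsInj s p q) :
    (∏ k ∈ s, ((X (p k) - X (q k)) : MvPolynomial (Fin (n - 1)) K))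
      ∈ spechtIdeal K (n - 1) (n - d) (d - 1) := by
  induction m generalizing s with
  | zero => omega
  | succ m ih =>
    by_cases h : d - 1 = m + 1
    · exact prod_mem_specht_exact K h1 h2 s (hcard.trans h.symm) p q hinj
    · have hm' : d - 1 ≤ m := by omega
      have hs : s.Nonempty := Finset.card_pos.mp (by omega)
      obtain ⟨x, hx⟩ := hs
      rw [← Finset.mul_prod_erase s _ hx]
      refine Ideal.mul_mem_left _ _ (ih (s.erase x)
        (by rw [Finset.card_erase_of_mem hx, hcard]; omega) hm' ?_)
      obtain ⟨hp, hq, hpq⟩ := hinj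
      exact ⟨fun k hk k' hk' => hp k (Finset.mem_of_mem_erase hk) k' (Finset.mem_of_mem_erase hk'),
        fun k hk k' hk' => hq k (Finset.mem_of_mem_erase hk) k' (Finset.mem_of_mem_erase hk'),
        fun k hk k' hk' => hpq k (Finset.mem_of_mem_erase hk) k' (Finset.mem_of_mem_erase hk')⟩

end Aux
/-- over an infinite field, for `d ≥ 2`, `n - d ≥ d`, if
`f_0, …, f_l ∈ S = K[x_1, …, x_{n-1}]` satisfy `∑ f_i x_n^i ∈ I^Sp_{(n-d,d)} ⊆ R`,
then each `f_i` lies in the Specht ideal `I^Sp_{(n-d,d-1)}` of `S`. -/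
theorem coeffs_mem_spechtIdeal (K : Type) [Field K] [Infinite K] (n d : ℕ)
    (h1 : 2 ≤ d) (h2 : d ≤ n - d) (l : ℕ) (f : Fin (l + 1) → MvPolynomial (Fin (n - 1)) K)
    (hf : (∑ i : Fin (l + 1),
        MvPolynomial.rename (Fin.castLE (n.sub_le 1)) (f i)
          * X (⟨n - 1, by omega⟩ : Fin n) ^ (i : ℕ))
      ∈ spechtIdeal K n (n - d) d) :
    ∀ i, f i ∈ spechtIdeal K (n - 1) (n - d) (d - 1) := by
  classical
  have hn : 2 * d ≤ n := by omega
  set lastv : Fin n := ⟨n - 1, by omega⟩ with hlastv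
  set g : Fin n → Polynomial (MvPolynomial (Fin (n - 1)) K) :=
    fun i => if h : (i : ℕ) < n - 1 then Polynomial.C (X ⟨(i : ℕ), h⟩) else Polynomial.X
    with hg_def
  set φ : MvPolynomial (Fin n) K →ₐ[K] Polynomial (MvPolynomial (Fin (n - 1)) K) :=
    aeval g with hφ_def
  -- the target ideal, pushed to the polynomial ring
  set J : Ideal (MvPolynomial (Fin (n - 1)) K) := spechtIdeal K (n - 1) (n - d) (d - 1) with hJ
  set M : Ideal (Polynomial (MvPolynomial (Fin (n - 1)) K)) :=
    Ideal.map (Polynomial.C : MvPolynomial (Fin (n - 1)) K →+* _) J with hM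
  -- lowering function
  set lower : Fin n → Fin (n - 1) :=
    fun i => if h : (i : ℕ) < n - 1 then ⟨(i : ℕ), h⟩ else ⟨0, by omega⟩ with hlower_def
  have hlt : ∀ i : Fin n, i ≠ lastv → (i : ℕ) < n - 1 := by
    intro i hi
    have h1 : (i : ℕ) ≠ n - 1 := fun h => hi (Fin.ext (by simp [hlastv, h]))
    have := i.isLt
    omega
  have hg : ∀ i : Fin n, i ≠ lastv → g i = Polynomial.C (X (lower i)) := by
    intro i hi
    have h := hlt i hi
    simp [hg_def, hlower_def, h]
  have hlower_inj : ∀ i i' : Fin n, i ≠ lastv → i' ≠ lastv → lower i = lower i' → i = i' := by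
    intro i i' hi hi' hll
    have h := hlt i hi
    have h' := hlt i' hi'
    simp only [hlower_def, dif_pos h, dif_pos h', Fin.mk.injEq] at hll
    exact Fin.ext hll
  have hglast : g lastv = Polynomial.X := by simp [hg_def, hlastv]
  -- φ on generators lands in M
  have hgen : ∀ T : TwoRowTab n (n - d) d Finset.univ, φ (spechtPoly K T) ∈ M := by
    intro T
    set a : Fin d → Fin n := fun k => T.top (Fin.castLE T.hba k) with ha_def
    set b : Fin d → Fin n := fun k => T.bot k with hb_def
    have haa : ∀ k k', a k = a k' → k = k' := by
      intro k k' h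
      have := T.inj (show Sum.elim T.top T.bot (Sum.inl (Fin.castLE T.hba k))
        = Sum.elim T.top T.bot (Sum.inl (Fin.castLE T.hba k')) from h)
      exact Fin.castLE_injective T.hba (Sum.inl.inj this)
    have hbb : ∀ k k', b k = b k' → k = k' := by
      intro k k' h
      have := T.inj (show Sum.elim T.top T.bot (Sum.inr k)
        = Sum.elim T.top T.bot (Sum.inr k') from h)
      exact Sum.inr.inj this
    have hab : ∀ k k', a k ≠ b k' := by
      intro k k' h
      have := T.inj (show Sum.elim T.top T.bot (Sum.inl (Fin.castLE T.hba k))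
        = Sum.elim T.top T.bot (Sum.inr k') from h)
      simp at this
    have hpoly : spechtPoly K T = ∏ k : Fin d, (X (a k) - X (b k)) := rfl
    have hCprod : ∀ s : Finset (Fin d), (∀ k ∈ s, a k ≠ lastv ∧ b k ≠ lastv) →
        φ (∏ k ∈ s, (X (a k) - X (b k)))
          = Polynomial.C (∏ k ∈ s, ((X (lower (a k)) - X (lower (b k)))
              : MvPolynomial (Fin (n - 1)) K)) := by
      intro s hs
      rw [map_prod, map_prod]
      refine Finset.prod_congr rfl fun k hk => ?_
      rw [map_sub, map_sub, hφ_def, aeval_X, aeval_X, hg _ (hs k hk).1, hg _ (hs k hk).2]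
    have hPI : ∀ s : Finset (Fin d), (∀ k ∈ s, a k ≠ lastv ∧ b k ≠ lastv) →
        PairsInj s (fun k => lower (a k)) (fun k => lower (b k)) := by
      intro s hs
      refine ⟨fun k hk k' hk' h => haa k k'
          (hlower_inj _ _ (hs k hk).1 (hs k' hk').1 h),
        fun k hk k' hk' h => hbb k k'
          (hlower_inj _ _ (hs k hk).2 (hs k' hk').2 h),
        fun k hk k' hk' h => hab k k'
          (hlower_inj _ _ (hs k hk).1 (hs k' hk').2 h)⟩
    by_cases hex : ∃ k0 : Fin d, a k0 = lastv ∨ b k0 = lastv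
    · obtain ⟨k0, hk0⟩ := hex
      have hrest : ∀ k ∈ Finset.univ.erase k0, a k ≠ lastv ∧ b k ≠ lastv := by
        intro k hk
        have hkk : k ≠ k0 := Finset.ne_of_mem_erase hk
        rcases hk0 with h0 | h0
        · exact ⟨fun h => hkk (haa k k0 (h.trans h0.symm)),
            fun h => hab k0 k (h0.trans h.symm)⟩
        · exact ⟨fun h => hab k k0 (h.trans h0.symm),
            fun h => hkk (hbb k k0 (h.trans h0.symm))⟩
      rw [hpoly, show (∏ k : Fin d, ((X (a k) - X (b k)) : MvPolynomial (Fin n) K))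
          = (X (a k0) - X (b k0)) * ∏ k ∈ Finset.univ.erase k0, (X (a k) - X (b k)) from
          (Finset.mul_prod_erase _ _ (Finset.mem_univ k0)).symm, map_mul]
      refine Ideal.mul_mem_left _ _ ?_
      rw [hCprod _ hrest]
      refine Ideal.mem_map_of_mem _ ?_
      refine prod_mem_specht K h1 h2 (d - 1) _ ?_ le_rfl _ _ (hPI _ hrest)
      rw [Finset.card_erase_of_mem (Finset.mem_univ k0), Finset.card_univ, Fintype.card_fin]
    · push_neg at hex
      have hall : ∀ k ∈ (Finset.univ : Finset (Fin d)), a k ≠ lastv ∧ b k ≠ lastv :=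
        fun k _ => hex k
      rw [hpoly, hCprod _ hall]
      refine Ideal.mem_map_of_mem _ ?_
      refine prod_mem_specht K h1 h2 d _ ?_ (by omega) _ _ (hPI _ hall)
      rw [Finset.card_univ, Fintype.card_fin]
  -- the hypothesis maps into M
  have hmem : φ (∑ i : Fin (l + 1),
      MvPolynomial.rename (Fin.castLE (n.sub_le 1)) (f i) * X lastv ^ (i : ℕ)) ∈ M := by
    have hsub : spechtIdeal K n (n - d) d ≤ Ideal.comap (φ : MvPolynomial (Fin n) K →+* _) M := by
      rw [spechtIdeal, Ideal.span_le]
      rintro x ⟨T, rfl⟩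
      exact hgen T
    exact hsub hf
  -- compute φ of the sum
  have hrename : ∀ pp : MvPolynomial (Fin (n - 1)) K,
      φ (MvPolynomial.rename (Fin.castLE (n.sub_le 1)) pp) = Polynomial.C pp := by
    intro pp
    rw [hφ_def, aeval_rename]
    have hcomp : (g ∘ Fin.castLE (n.sub_le 1)) = fun i : Fin (n - 1) => Polynomial.C (X i) := by
      funext i
      have hi : ((Fin.castLE (n.sub_le 1) i : Fin n) : ℕ) < n - 1 := i.isLt
      simp only [Function.comp, hg_def, dif_pos hi]
      congr 1
    rw [hcomp]
    induction pp using MvPolynomial.induction_on with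
    | C c => simp [Polynomial.algebraMap_eq, algebraMap_eq]
    | add p q hp hq => simp [hp, hq]
    | mul_X p i hp => simp [hp]
  have hφsum : φ (∑ i : Fin (l + 1),
      MvPolynomial.rename (Fin.castLE (n.sub_le 1)) (f i) * X lastv ^ (i : ℕ))
      = ∑ i : Fin (l + 1), Polynomial.C (f i) * Polynomial.X ^ (i : ℕ) := by
    rw [map_sum]
    refine Finset.sum_congr rfl fun i _ => ?_
    rw [map_mul, map_pow, hrename, hφ_def, aeval_X, hglast]
  rw [hφsum] at hmem
  intro i
  have hco := (Ideal.mem_map_C_iff.mp hmem) (i : ℕ)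
  have hcoeff : (∑ j : Fin (l + 1), Polynomial.C (f j) * Polynomial.X ^ (j : ℕ)).coeff (i : ℕ)
      = f i := by
    rw [Polynomial.finset_sum_coeff]
    rw [Finset.sum_eq_single i]
    · simp
    · intro j _ hji
      have : (i : ℕ) ≠ (j : ℕ) := fun h => hji (Fin.ext h.symm)
      simp [Polynomial.coeff_C_mul, Polynomial.coeff_X_pow, this]
    · intro h; exact absurd (Finset.mem_univ i) h
  rw [hcoeff] at hco
  exact hco
end
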